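/- arXiv:2202.01562 — 4 statements merged into one kernel-verified Lean document; each statement's English description precedes it below -/
import Mathlib

section
/- Unbiasedness of RIPS under the cascade assumption: if the cascade assumption holds and π_b has full support, then for any evaluation policy π_e, the Reward interaction IPS estimator is unbiased: E_D[V̂_RIPS(π_e; D)] = V(π_e), where E_D denotes expectation over the n i.i.d. logged samples drawn from p(x) π_b(a|x) p(r|x,a). -/
open Finset Function
open scoped Classical

section Setup

variable {L : ℕ} {X A R : Type*}

/-- Probability, under policy `π` in context `x`, that the first `k` slots of the
chosen slate agree with the prefix `a_{1:k}` of `a` (the marginal `π(a_{1:k} | x)`). -/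
noncomputable def pmarg [Fintype A] (π : X → (Fin L → A) → ℝ) (k : ℕ) (x : X)
    (a : Fin L → A) : ℝ :=
  ∑ a' : Fin L → A, if ∀ i : Fin L, (i : ℕ) < k → a' i = a i then π x a' else 0

/-- Conditional probability `π(a_l | x, a_{1:l-1})`. -/
noncomputable def pcond [Fintype A] (π : X → (Fin L → A) → ℝ) (l : Fin L) (x : X)
    (a : Fin L → A) : ℝ :=
  pmarg π ((l : ℕ) + 1) x a / pmarg π (l : ℕ) x a

/-- Slot-level importance weight `w_{1:l}(l) = π_e(a_l | x, a_{1:l-1}) / π_b(a_l | x, a_{1:l-1})`. -/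
noncomputable def wstep [Fintype A] (πb πe : X → (Fin L → A) → ℝ) (l : Fin L) (x : X)
    (a : Fin L → A) : ℝ :=
  pcond πe l x a / pcond πb l x a

/-- Cascade assumption: the conditional distribution of `r_l` given `(x, a, r_{1:l-1})`
depends only on `(x, a_{1:l}, r_{1:l-1})`.  Here `κ l x a r` denotes the conditional
probability `p(r_l | x, a, r_{1:l-1})` evaluated at the value `r l`. -/
def Cascade (κ : Fin L → X → (Fin L → A) → (Fin L → R) → ℝ) : Prop :=
  ∀ (l : Fin L) (x : X) (a a' : Fin L → A) (r r' : Fin L → R),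
    (∀ k : Fin L, (k : ℕ) ≤ (l : ℕ) → a k = a' k) →
    (∀ k : Fin L, (k : ℕ) ≤ (l : ℕ) → r k = r' k) →
    κ l x a r = κ l x a' r'

/-- Independence assumption: the conditional distribution of `r_l` given
`(x, a, r_{1:l-1})` depends only on `(x, a_l)`. -/
def Indep (κ : Fin L → X → (Fin L → A) → (Fin L → R) → ℝ) : Prop :=
  ∀ (l : Fin L) (x : X) (a a' : Fin L → A) (r r' : Fin L → R),
    a l = a' l → r l = r' l → κ l x a r = κ l x a' r'

/-- Joint reward distribution `p(r | x, a)` induced by the slot-level conditional kernels. -/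
noncomputable def jointR (κ : Fin L → X → (Fin L → A) → (Fin L → R) → ℝ)
    (x : X) (a : Fin L → A) (r : Fin L → R) : ℝ :=
  ∏ l : Fin L, κ l x a r

/-- Slate-level reward `r* = Σ_l α_l r_l`. -/
noncomputable def slateReward (α : Fin L → ℝ) (val : R → ℝ) (r : Fin L → R) : ℝ :=
  ∑ l : Fin L, α l * val (r l)

/-- Policy value `V(π_e) = E_{x∼p, a∼π_e(·|x), r∼p(·|x,a)}[r*]`. -/
noncomputable def polValue [Fintype X] [Fintype A] [Fintype R] (px : X → ℝ)
    (πe : X → (Fin L → A) → ℝ) (p : X → (Fin L → A) → (Fin L → R) → ℝ)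
    (α : Fin L → ℝ) (val : R → ℝ) : ℝ :=
  ∑ x : X, px x * ∑ a : Fin L → A, πe x a * ∑ r : Fin L → R, p x a r * slateReward α val r

/-- Expectation `E_D[f]` over the logged dataset of `n` i.i.d. samples from
`p(x) π_b(a|x) p(r|x,a)`. -/
noncomputable def expD [Fintype X] [Fintype A] [Fintype R] {n : ℕ} (px : X → ℝ)
    (πb : X → (Fin L → A) → ℝ) (p : X → (Fin L → A) → (Fin L → R) → ℝ)
    (f : (Fin n → X × (Fin L → A) × (Fin L → R)) → ℝ) : ℝ :=
  ∑ D : Fin n → X × (Fin L → A) × (Fin L → R),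
    (∏ i : Fin n, px (D i).1 * πb (D i).1 (D i).2.1 * p (D i).1 (D i).2.1 (D i).2.2) * f D

/-- Per-sample IPS estimate `w(x,a) r*`. -/
noncomputable def ipsSample (πb πe : X → (Fin L → A) → ℝ) (α : Fin L → ℝ) (val : R → ℝ)
    (x : X) (a : Fin L → A) (r : Fin L → R) : ℝ :=
  (πe x a / πb x a) * slateReward α val r

/-- Marginal probability that slot `l` receives action `b` under policy `π`. -/
noncomputable def slotMarg [Fintype A] (π : X → (Fin L → A) → ℝ) (l : Fin L) (x : X)
    (b : A) : ℝ :=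
  ∑ a : Fin L → A, if a l = b then π x a else 0

/-- Per-sample IIPS estimate `Σ_l w_l(x, a_l) α_l r_l`. -/
noncomputable def iipsSample [Fintype A] (πb πe : X → (Fin L → A) → ℝ) (α : Fin L → ℝ)
    (val : R → ℝ) (x : X) (a : Fin L → A) (r : Fin L → R) : ℝ :=
  ∑ l : Fin L, (slotMarg πe l x (a l) / slotMarg πb l x (a l)) * (α l * val (r l))

/-- Per-sample RIPS estimate `Σ_l w_{1:l}(x, a_{1:l}) α_l r_l`. -/
noncomputable def ripsSample [Fintype A] (πb πe : X → (Fin L → A) → ℝ) (α : Fin L → ℝ)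
    (val : R → ℝ) (x : X) (a : Fin L → A) (r : Fin L → R) : ℝ :=
  ∑ l : Fin L, (pmarg πe ((l : ℕ) + 1) x a / pmarg πb ((l : ℕ) + 1) x a) * (α l * val (r l))

/-- Per-sample Cascade-DR estimate
`Σ_l [ w_{1:l}(α_l r_l − Q̂_l(x,a_{1:l})) + w_{1:l-1} E_{a'_l∼π_e}[Q̂_l(x,a_{1:l-1},a'_l)] ]`. -/
noncomputable def cdrSample [Fintype A] (πb πe : X → (Fin L → A) → ℝ)
    (Qhat : Fin L → X → (Fin L → A) → ℝ) (α : Fin L → ℝ) (val : R → ℝ)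
    (x : X) (a : Fin L → A) (r : Fin L → R) : ℝ :=
  ∑ l : Fin L,
    ((pmarg πe ((l : ℕ) + 1) x a / pmarg πb ((l : ℕ) + 1) x a) * (α l * val (r l) - Qhat l x a)
      + (pmarg πe (l : ℕ) x a / pmarg πb (l : ℕ) x a) *
          ∑ b : A, pcond πe l x (Function.update a l b) * Qhat l x (Function.update a l b))

/-- Recursive RIPS estimate: `ripsRec m k` is `V̂_RIPS` over the `m` slots starting at
(0-indexed) slot `k`, i.e. `V̂_RIPS^{L+1-l}` corresponds to `ripsRec (L-k) k` with `k = l-1`. -/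
noncomputable def ripsRec [Fintype A] (πb πe : X → (Fin L → A) → ℝ) (α : Fin L → ℝ)
    (val : R → ℝ) : ℕ → ℕ → X → (Fin L → A) → (Fin L → R) → ℝ
  | 0, _, _, _, _ => 0
  | m + 1, k, x, a, r =>
      if h : k < L then
        wstep πb πe ⟨k, h⟩ x a *
          (α ⟨k, h⟩ * val (r ⟨k, h⟩) + ripsRec πb πe α val m (k + 1) x a r)
      else 0

/-- Recursive Cascade-DR estimate: `cdrRec m k` is `V̂_CDR` over the `m` slots starting at
(0-indexed) slot `k`. -/
noncomputable def cdrRec [Fintype A] (πb πe : X → (Fin L → A) → ℝ)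
    (Qhat : Fin L → X → (Fin L → A) → ℝ) (α : Fin L → ℝ) (val : R → ℝ) :
    ℕ → ℕ → X → (Fin L → A) → (Fin L → R) → ℝ
  | 0, _, _, _, _ => 0
  | m + 1, k, x, a, r =>
      if h : k < L then
        wstep πb πe ⟨k, h⟩ x a *
            (α ⟨k, h⟩ * val (r ⟨k, h⟩) + cdrRec πb πe Qhat α val m (k + 1) x a r
              - Qhat ⟨k, h⟩ x a)
          + ∑ b : A, pcond πe ⟨k, h⟩ x (Function.update a ⟨k, h⟩ b) *
              Qhat ⟨k, h⟩ x (Function.update a ⟨k, h⟩ b)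
      else 0

/-- Iterated conditional expectation: `nestE π κ m k x a r f` is
`E_{π(k)}[E_{π(k+1)}[⋯E_{π(k+m-1)}[f]⋯]]`, conditional on the prefix `(x, a_{1:k-1}, r_{1:k-1})`,
where each step draws `a_l ∼ π(a_l | x, a_{1:l-1})` and `r_l ∼ p(r_l | x, a_{1:l}, r_{1:l-1})`. -/
noncomputable def nestE [Fintype A] [Fintype R] (π : X → (Fin L → A) → ℝ)
    (κ : Fin L → X → (Fin L → A) → (Fin L → R) → ℝ) :
    ℕ → ℕ → X → (Fin L → A) → (Fin L → R) → ((Fin L → A) → (Fin L → R) → ℝ) → ℝ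
  | 0, _, _, a, r, f => f a r
  | m + 1, k, x, a, r, f =>
      if h : k < L then
        ∑ b : A, ∑ v : R,
          pcond π ⟨k, h⟩ x (Function.update a ⟨k, h⟩ b) *
            κ ⟨k, h⟩ x (Function.update a ⟨k, h⟩ b) (Function.update r ⟨k, h⟩ v) *
            nestE π κ m (k + 1) x (Function.update a ⟨k, h⟩ b) (Function.update r ⟨k, h⟩ v) f
      else f a r

/-- Conditional expectation `E_l[f]` (0-indexed slot `k = l-1`) over the remaining slots
`(a_{l:L}, r_{l:L})` under the evaluation policy, given the prefix `(x, a_{1:l-1}, r_{1:l-1})`. -/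
noncomputable def condE [Fintype A] [Fintype R] (πe : X → (Fin L → A) → ℝ)
    (κ : Fin L → X → (Fin L → A) → (Fin L → R) → ℝ) (k : ℕ) (x : X) (a : Fin L → A)
    (r : Fin L → R) (f : (Fin L → A) → (Fin L → R) → ℝ) : ℝ :=
  nestE πe κ (L - k) k x a r f

/-- Conditional variance `V_l(f)`. -/
noncomputable def condVar [Fintype A] [Fintype R] (πe : X → (Fin L → A) → ℝ)
    (κ : Fin L → X → (Fin L → A) → (Fin L → R) → ℝ) (k : ℕ) (x : X) (a : Fin L → A)
    (r : Fin L → R) (f : (Fin L → A) → (Fin L → R) → ℝ) : ℝ :=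
  condE πe κ k x a r (fun a' r' => f a' r' ^ 2) - condE πe κ k x a r f ^ 2

/-- Conditional value of the remaining slots `V^{L+1-l} = E_l[Σ_{l'=l}^L α_{l'} r_{l'}]`
(0-indexed slot `k = l-1`). -/
noncomputable def remVal [Fintype A] [Fintype R] (πe : X → (Fin L → A) → ℝ)
    (κ : Fin L → X → (Fin L → A) → (Fin L → R) → ℝ) (α : Fin L → ℝ) (val : R → ℝ)
    (k : ℕ) (x : X) (a : Fin L → A) (r : Fin L → R) : ℝ :=
  condE πe κ k x a r (fun _ r' => ∑ l : Fin L, if k ≤ (l : ℕ) then α l * val (r' l) else 0)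

/-- Slot-level conditional mean reward `q_l(x, a_{1:l}) = E[r_l | x, a_{1:l}, r_{1:l-1}]`. -/
noncomputable def qslot [Fintype R] (κ : Fin L → X → (Fin L → A) → (Fin L → R) → ℝ)
    (val : R → ℝ) (l : Fin L) (x : X) (a : Fin L → A) (r : Fin L → R) : ℝ :=
  ∑ v : R, κ l x a (Function.update r l v) * val v

/-- Conditional variance of the slot reward `V_{r_l}(r_l)` given `(x, a_{1:l}, r_{1:l-1})`. -/
noncomputable def varSlot [Fintype R] (κ : Fin L → X → (Fin L → A) → (Fin L → R) → ℝ)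
    (val : R → ℝ) (l : Fin L) (x : X) (a : Fin L → A) (r : Fin L → R) : ℝ :=
  (∑ v : R, κ l x a (Function.update r l v) * val v ^ 2) - qslot κ val l x a r ^ 2

/-- Nested value recursion `N_k = E_{e(k)}[α_k r_k + N_{k+1}]` over `m` remaining slots. -/
noncomputable def nestedVal [Fintype A] [Fintype R] (πe : X → (Fin L → A) → ℝ)
    (κ : Fin L → X → (Fin L → A) → (Fin L → R) → ℝ) (α : Fin L → ℝ) (val : R → ℝ) :
    ℕ → ℕ → X → (Fin L → A) → (Fin L → R) → ℝ
  | 0, _, _, _, _ => 0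
  | m + 1, k, x, a, r =>
      if h : k < L then
        ∑ b : A, ∑ v : R,
          pcond πe ⟨k, h⟩ x (Function.update a ⟨k, h⟩ b) *
            κ ⟨k, h⟩ x (Function.update a ⟨k, h⟩ b) (Function.update r ⟨k, h⟩ v) *
            (α ⟨k, h⟩ * val v +
              nestedVal πe κ α val m (k + 1) x (Function.update a ⟨k, h⟩ b)
                (Function.update r ⟨k, h⟩ v))
      else 0

end Setup


section AuxRIPS
variable {L : ℕ} {X A R : Type*}

-- pmarg depends only on prefix
lemma pmarg_congr [Fintype A] (π : X → (Fin L → A) → ℝ) (k : ℕ) (x : X) {a a' : Fin L → A}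
    (h : ∀ i : Fin L, (i : ℕ) < k → a i = a' i) :
    pmarg π k x a = pmarg π k x a' := by
  refine Finset.sum_congr rfl fun b _ => ?_
  exact if_congr ⟨fun hb i hi => (hb i hi).trans (h i hi),
    fun hb i hi => (hb i hi).trans (h i hi).symm⟩ rfl rfl

lemma pmarg_pos [Fintype A] (πb : X → (Fin L → A) → ℝ) (x : X)
    (hb0 : ∀ a, 0 < πb x a) (k : ℕ) (a : Fin L → A) : 0 < pmarg πb k x a := by
  have h1 : (if ∀ i : Fin L, (i : ℕ) < k → a i = a i then πb x a else 0)
      ≤ pmarg πb k x a := by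
    refine Finset.single_le_sum (f := fun b => if ∀ i : Fin L, (i : ℕ) < k → b i = a i then πb x b else 0) (fun b _ => ?_) (Finset.mem_univ a)
    split
    · exact (hb0 b).le
    · exact le_refl 0
  rw [if_pos (fun i _ => rfl)] at h1
  exact lt_of_lt_of_le (hb0 a) h1

lemma reweight [Fintype A] (πb πe : X → (Fin L → A) → ℝ) (x : X)
    (hb0 : ∀ a, 0 < πb x a) (k : ℕ) (F : (Fin L → A) → ℝ)
    (hF : ∀ a a' : Fin L → A, (∀ i : Fin L, (i : ℕ) < k → a i = a' i) → F a = F a') :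
    ∑ a : Fin L → A, πb x a * (pmarg πe k x a / pmarg πb k x a) * F a
      = ∑ a : Fin L → A, πe x a * F a := by
  have hpos : ∀ a, 0 < pmarg πb k x a := pmarg_pos πb x hb0 k
  have hE : ∀ a : Fin L → A, pmarg πe k x a
      = ∑ a' : Fin L → A, if ∀ i : Fin L, (i : ℕ) < k → a' i = a i then πe x a' else 0 :=
    fun a => rfl
  calc ∑ a : Fin L → A, πb x a * (pmarg πe k x a / pmarg πb k x a) * F a
      = ∑ a : Fin L → A, ∑ a' : Fin L → A,
          if ∀ i : Fin L, (i : ℕ) < k → a' i = a i then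
            πb x a / pmarg πb k x a * F a * πe x a' else 0 := by
        refine Finset.sum_congr rfl fun a _ => ?_
        rw [hE a, div_eq_mul_inv, Finset.sum_mul, Finset.mul_sum, Finset.sum_mul]
        refine Finset.sum_congr rfl fun a' _ => ?_
        split_ifs
        · field_simp
        · simp
    _ = ∑ a' : Fin L → A, ∑ a : Fin L → A,
          if ∀ i : Fin L, (i : ℕ) < k → a' i = a i then
            πb x a / pmarg πb k x a * F a * πe x a' else 0 := Finset.sum_comm
    _ = ∑ a' : Fin L → A, πe x a' * F a' := by
        refine Finset.sum_congr rfl fun a' _ => ?_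
        calc ∑ a : Fin L → A, (if ∀ i : Fin L, (i : ℕ) < k → a' i = a i then
                πb x a / pmarg πb k x a * F a * πe x a' else 0)
            = ∑ a : Fin L → A, (if ∀ i : Fin L, (i : ℕ) < k → a' i = a i then
                πb x a else 0) * (F a' * πe x a' / pmarg πb k x a') := by
              refine Finset.sum_congr rfl fun a _ => ?_
              split_ifs with h
              · rw [pmarg_congr πb k x (fun i hi => (h i hi).symm),
                  hF a a' (fun i hi => (h i hi).symm)]
                ring
              · simp
          _ = pmarg πb k x a' * (F a' * πe x a' / pmarg πb k x a') := by
              rw [← Finset.sum_mul]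
              congr 1
              refine Finset.sum_congr rfl fun b _ => ?_
              exact if_congr ⟨fun hb i hi => (hb i hi).symm,
                fun hb i hi => (hb i hi).symm⟩ rfl rfl
          _ = πe x a' * F a' := by
              rw [mul_comm (pmarg πb k x a'), div_mul_cancel₀ _ (hpos a').ne']
              ring

/-- Summing out one coordinate of `r` against a normalized kernel. -/
lemma marginalize [Fintype R] [Nonempty R]
    (κ : Fin L → X → (Fin L → A) → (Fin L → R) → ℝ) {m : ℕ} (hmL : m < L)
    (x : X) (b : Fin L → A)
    (hκ1 : ∀ r : Fin L → R, ∑ v : R, κ ⟨m, hmL⟩ x b (Function.update r ⟨m, hmL⟩ v) = 1)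
    (H : (Fin L → R) → ℝ)
    (hH : ∀ r r' : Fin L → R, (∀ j : Fin L, j ≠ ⟨m, hmL⟩ → r j = r' j) → H r = H r') :
    (Fintype.card R : ℝ) * ∑ r : Fin L → R, κ ⟨m, hmL⟩ x b r * H r
      = ∑ r : Fin L → R, H r := by
  set M : Fin L := ⟨m, hmL⟩ with hM
  set e := Equiv.funSplitAt M R with he
  have hupd : ∀ (v w : R) (g : { j // j ≠ M } → R),
      Function.update (e.symm (w, g)) M v = e.symm (v, g) := by
    intro v w g
    funext j
    by_cases h : j = M
    · subst h; simp [he, Equiv.funSplitAt, Equiv.piSplitAt, Function.update]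
    · simp [he, Equiv.funSplitAt, Equiv.piSplitAt, Function.update, h]
  have hcoord : ∀ (v w : R) (g : { j // j ≠ M } → R) (j : Fin L), j ≠ M →
      e.symm (v, g) j = e.symm (w, g) j := by
    intro v w g j h
    simp [he, Equiv.funSplitAt, Equiv.piSplitAt, h]
  have h1 : ∀ f : (Fin L → R) → ℝ,
      ∑ r : Fin L → R, f r = ∑ v : R, ∑ g : { j // j ≠ M } → R, f (e.symm (v, g)) := by
    intro f
    rw [← Equiv.sum_comp e.symm f, Fintype.sum_prod_type]
  obtain ⟨v₀⟩ := ‹Nonempty R›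
  have hHv : ∀ (v : R) (g : { j // j ≠ M } → R),
      H (e.symm (v, g)) = H (e.symm (v₀, g)) :=
    fun v g => hH _ _ (fun j hj => hcoord v v₀ g j hj)
  calc (Fintype.card R : ℝ) * ∑ r : Fin L → R, κ M x b r * H r
      = (Fintype.card R : ℝ) * ∑ v : R, ∑ g : { j // j ≠ M } → R,
          κ M x b (e.symm (v, g)) * H (e.symm (v₀, g)) := by
        rw [h1 (fun r => κ M x b r * H r)]
        congr 1
        exact Finset.sum_congr rfl fun v _ => Finset.sum_congr rfl fun g _ => by rw [hHv]
    _ = (Fintype.card R : ℝ) * ∑ g : { j // j ≠ M } → R,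
          (∑ v : R, κ M x b (e.symm (v, g))) * H (e.symm (v₀, g)) := by
        rw [Finset.sum_comm]
        congr 1
        exact Finset.sum_congr rfl fun g _ => (Finset.sum_mul _ _ _).symm
    _ = (Fintype.card R : ℝ) * ∑ g : { j // j ≠ M } → R, H (e.symm (v₀, g)) := by
        congr 1
        refine Finset.sum_congr rfl fun g _ => ?_
        have hk : ∑ v : R, κ M x b (e.symm (v, g)) = 1 := by
          have := hκ1 (e.symm (v₀, g))
          calc ∑ v : R, κ M x b (e.symm (v, g))
              = ∑ v : R, κ M x b (Function.update (e.symm (v₀, g)) M v) :=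
                Finset.sum_congr rfl fun v _ => by rw [hupd]
            _ = 1 := this
        rw [hk, one_mul]
    _ = ∑ v : R, ∑ g : { j // j ≠ M } → R, H (e.symm (v, g)) := by
        rw [Finset.sum_congr rfl fun (v : R) _ =>
          Finset.sum_congr rfl fun g (_ : g ∈ Finset.univ) => (hHv v g)]
        rw [Finset.sum_const, Finset.card_univ, nsmul_eq_mul]
    _ = ∑ r : Fin L → R, H r := (h1 H).symm

/-- partial product over slots `< m` -/
noncomputable def pprod [Fintype R] (κ : Fin L → X → (Fin L → A) → (Fin L → R) → ℝ)
    (m : ℕ) (x : X) (a : Fin L → A) (r : Fin L → R) : ℝ :=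
  ∏ l' ∈ Finset.univ.filter (fun l' : Fin L => (l' : ℕ) < m), κ l' x a r

lemma pprod_filter_succ [Fintype R] (κ : Fin L → X → (Fin L → A) → (Fin L → R) → ℝ)
    {m : ℕ} (hmL : m < L) (x : X) (a : Fin L → A) (r : Fin L → R) :
    pprod κ (m + 1) x a r = κ ⟨m, hmL⟩ x a r * pprod κ m x a r := by
  unfold pprod
  have hins : Finset.univ.filter (fun l' : Fin L => (l' : ℕ) < m + 1)
      = insert (⟨m, hmL⟩ : Fin L) (Finset.univ.filter (fun l' : Fin L => (l' : ℕ) < m)) := by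
    ext l'
    simp only [Finset.mem_filter, Finset.mem_univ, true_and, Finset.mem_insert, Fin.ext_iff]
    omega
  rw [hins, Finset.prod_insert (by simp)]

lemma pprod_stable [Fintype R] (κ : Fin L → X → (Fin L → A) → (Fin L → R) → ℝ)
    {m : ℕ} (hLm : L ≤ m) (x : X) (a : Fin L → A) (r : Fin L → R) :
    pprod κ (m + 1) x a r = pprod κ m x a r := by
  unfold pprod
  congr 1
  ext l'
  simp only [Finset.mem_filter, Finset.mem_univ, true_and]
  have := l'.is_lt
  omega

lemma pprod_dep [Fintype R] (κ : Fin L → X → (Fin L → A) → (Fin L → R) → ℝ)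
    (hcas : Cascade κ) (m : ℕ) (x : X) (a a' : Fin L → A) (r r' : Fin L → R)
    (ha : ∀ k : Fin L, (k : ℕ) < m → a k = a' k)
    (hr : ∀ k : Fin L, (k : ℕ) < m → r k = r' k) :
    pprod κ m x a r = pprod κ m x a' r' := by
  refine Finset.prod_congr rfl fun l' hl' => ?_
  simp only [Finset.mem_filter, Finset.mem_univ, true_and] at hl'
  exact hcas l' x a a' r r' (fun k hk => ha k (by omega)) (fun k hk => hr k (by omega))

/-- normalization of partial products -/
lemma pprod_sum [Fintype R] (κ : Fin L → X → (Fin L → A) → (Fin L → R) → ℝ)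
    (hcas : Cascade κ) (x : X) (a : Fin L → A)
    (hκ1 : ∀ (l : Fin L) (r : Fin L → R),
      ∑ v : R, κ l x a (Function.update r l v) = 1)
    (hne : Nonempty (Fin L → R)) :
    ∀ m : ℕ, m ≤ L → ∑ r : Fin L → R, pprod κ m x a r = (Fintype.card R : ℝ) ^ (L - m) := by
  intro m
  induction m with
  | zero =>
    intro _
    unfold pprod
    have : Finset.univ.filter (fun l' : Fin L => (l' : ℕ) < 0) = ∅ := by
      ext l'; simp
    simp only [this, Finset.prod_empty]
    rw [Finset.sum_const, Finset.card_univ, nsmul_eq_mul, mul_one,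
      Nat.sub_zero]
    rw [show Fintype.card (Fin L → R) = Fintype.card R ^ L by
      rw [Fintype.card_fun, Fintype.card_fin]]
    push_cast
    ring
  | succ m ih =>
    intro hm1
    have hmL : m < L := hm1
    haveI : Nonempty R := ⟨Classical.arbitrary (Fin L → R) ⟨m, hmL⟩⟩
    have hcard : (0 : ℝ) < (Fintype.card R : ℝ) := by
      exact_mod_cast Fintype.card_pos
    have hmarg := marginalize κ hmL x a (fun r => hκ1 ⟨m, hmL⟩ r)
      (pprod κ m x a)
      (fun r r' h => pprod_dep κ hcas m x a a r r' (fun _ _ => rfl)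
        (fun k hk => h k (by simp only [ne_eq, Fin.ext_iff]; omega)))
    have hsum : ∑ r : Fin L → R, κ ⟨m, hmL⟩ x a r * pprod κ m x a r
        = ∑ r : Fin L → R, pprod κ (m + 1) x a r :=
      Finset.sum_congr rfl fun r _ => (pprod_filter_succ κ hmL x a r).symm
    rw [hsum, ih hmL.le] at hmarg
    have hpow : (Fintype.card R : ℝ) ^ (L - m)
        = (Fintype.card R : ℝ) * (Fintype.card R : ℝ) ^ (L - (m + 1)) := by
      rw [← pow_succ']
      congr 1
      omega
    rw [hpow] at hmarg
    exact mul_left_cancel₀ hcard.ne' hmarg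

lemma jointR_sum [Fintype R] (κ : Fin L → X → (Fin L → A) → (Fin L → R) → ℝ)
    (hcas : Cascade κ) (x : X) (a : Fin L → A)
    (hκ1 : ∀ (l : Fin L) (r : Fin L → R),
      ∑ v : R, κ l x a (Function.update r l v) = 1)
    (hne : Nonempty (Fin L → R)) :
    ∑ r : Fin L → R, jointR κ x a r = 1 := by
  have h := pprod_sum κ hcas x a hκ1 hne L le_rfl
  rw [Nat.sub_self, pow_zero] at h
  rw [← h]
  refine Finset.sum_congr rfl fun r _ => ?_
  unfold jointR pprod
  refine (Finset.prod_congr ?_ fun _ _ => rfl)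
  ext l'
  simp [l'.is_lt]

/-- the conditional mean of `val (r l)` depends only on the prefix `a_{1:l}` -/
lemma gdep [Fintype R] (κ : Fin L → X → (Fin L → A) → (Fin L → R) → ℝ) (val : R → ℝ)
    (hcas : Cascade κ) (x : X)
    (hκ1 : ∀ (l : Fin L) (b : Fin L → A) (r : Fin L → R),
      ∑ v : R, κ l x b (Function.update r l v) = 1)
    (l : Fin L) (a a' : Fin L → A)
    (hpre : ∀ k : Fin L, (k : ℕ) ≤ (l : ℕ) → a k = a' k) :
    ∑ r : Fin L → R, jointR κ x a r * val (r l)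
      = ∑ r : Fin L → R, jointR κ x a' r * val (r l) := by
  rcases isEmpty_or_nonempty (Fin L → R) with hE | hNE
  · simp
  haveI : Nonempty R := ⟨Classical.arbitrary (Fin L → R) l⟩
  have key : ∀ m : ℕ, (l : ℕ) < m →
      ∑ r : Fin L → R, pprod κ m x a r * val (r l)
        = ∑ r : Fin L → R, pprod κ m x a' r * val (r l) := by
    intro m
    induction m with
    | zero => omega
    | succ m ih =>
      intro hm
      rcases Nat.lt_or_ge (l : ℕ) m with hlm | hlm
      · by_cases hmL : m < L
        · -- marginalize slot m on both sides
          have hcard : (0 : ℝ) < (Fintype.card R : ℝ) := by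
            exact_mod_cast Fintype.card_pos
          have hHdep : ∀ b : Fin L → A, ∀ r r' : Fin L → R,
              (∀ j : Fin L, j ≠ ⟨m, hmL⟩ → r j = r' j) →
              pprod κ m x b r * val (r l) = pprod κ m x b r' * val (r' l) := by
            intro b r r' h
            have h1 : pprod κ m x b r = pprod κ m x b r' :=
              pprod_dep κ hcas m x b b r r' (fun _ _ => rfl)
                (fun k hk => h k (by simp only [ne_eq, Fin.ext_iff]; omega))
            have h2 : r l = r' l := h l (by simp only [ne_eq, Fin.ext_iff]; omega)
            rw [h1, h2]
          have hma := marginalize κ hmL x a (fun r => hκ1 ⟨m, hmL⟩ a r)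
            (fun r => pprod κ m x a r * val (r l)) (hHdep a)
          have hma' := marginalize κ hmL x a' (fun r => hκ1 ⟨m, hmL⟩ a' r)
            (fun r => pprod κ m x a' r * val (r l)) (hHdep a')
          have hs : ∀ b : Fin L → A,
              ∑ r : Fin L → R, κ ⟨m, hmL⟩ x b r * (pprod κ m x b r * val (r l))
                = ∑ r : Fin L → R, pprod κ (m + 1) x b r * val (r l) :=
            fun b => Finset.sum_congr rfl fun r _ => by
              rw [pprod_filter_succ κ hmL x b r]; ring
          rw [hs a] at hma
          rw [hs a'] at hma'
          have := ih hlm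
          rw [this] at hma
          rw [← hma'] at hma
          exact mul_left_cancel₀ hcard.ne' hma
        · have heq : ∀ b r, pprod κ (m+1) x b r = pprod κ m x b r :=
            fun b r => pprod_stable κ (by omega) x b r
          simp only [heq]
          exact ih hlm
      · -- base: m = l, products agree pointwise by cascade
        refine Finset.sum_congr rfl fun r _ => ?_
        rw [pprod_dep κ hcas (m+1) x a a' r r
          (fun k hk => hpre k (by omega)) (fun _ _ => rfl)]
  have h := key L l.is_lt
  have hjp : ∀ b r, jointR κ x b r = pprod κ L x b r := by
    intro b r
    unfold jointR pprod
    refine (Finset.prod_congr ?_ fun _ _ => rfl).symm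
    ext l'; simp [l'.is_lt]
  simp only [hjp]
  exact h

end AuxRIPS

lemma iid_reduce {Z : Type*} [Fintype Z] {n : ℕ} (hn : 0 < n) (w h : Z → ℝ)
    (hw1 : ∑ z : Z, w z = 1) :
    ∑ D : Fin n → Z, (∏ i : Fin n, w (D i)) * ((n : ℝ)⁻¹ * ∑ i : Fin n, h (D i))
      = ∑ z : Z, w z * h z := by
  have hkey : ∀ i : Fin n,
      ∑ D : Fin n → Z, (∏ j : Fin n, w (D j)) * h (D i) = ∑ z : Z, w z * h z := by
    intro i
    calc ∑ D : Fin n → Z, (∏ j : Fin n, w (D j)) * h (D i)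
        = ∑ D : Fin n → Z, ∏ j : Fin n, (if j = i then w (D j) * h (D j) else w (D j)) := by
          refine Finset.sum_congr rfl fun D _ => ?_
          rw [← Finset.prod_erase_mul Finset.univ
              (fun j => if j = i then w (D j) * h (D j) else w (D j)) (Finset.mem_univ i),
            ← Finset.prod_erase_mul Finset.univ (fun j => w (D j)) (Finset.mem_univ i)]
          rw [Finset.prod_congr rfl
            (fun j hj => if_neg (Finset.mem_erase.mp hj).1 :
              ∀ j ∈ Finset.univ.erase i,
                (if j = i then w (D j) * h (D j) else w (D j)) = w (D j))]
          rw [if_pos rfl]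
          ring
      _ = ∏ j : Fin n, ∑ z : Z, (if j = i then w z * h z else w z) :=
          (Fintype.prod_sum fun j z => if j = i then w z * h z else w z).symm
      _ = ∏ j : Fin n, (if j = i then ∑ z : Z, w z * h z else 1) := by
          refine Finset.prod_congr rfl fun j _ => ?_
          by_cases hj : j = i
          · simp [hj]
          · simp [hj, hw1]
      _ = ∑ z : Z, w z * h z := by
          rw [Finset.prod_ite_eq' Finset.univ i (fun _ => ∑ z : Z, w z * h z)]
          simp
  calc ∑ D : Fin n → Z, (∏ i : Fin n, w (D i)) * ((n : ℝ)⁻¹ * ∑ i : Fin n, h (D i))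
      = (n : ℝ)⁻¹ * ∑ D : Fin n → Z, ∑ i : Fin n, (∏ j : Fin n, w (D j)) * h (D i) := by
        rw [Finset.mul_sum]
        refine Finset.sum_congr rfl fun D _ => ?_
        conv_rhs => rw [← Finset.mul_sum]
        ring
    _ = (n : ℝ)⁻¹ * ∑ i : Fin n, ∑ D : Fin n → Z, (∏ j : Fin n, w (D j)) * h (D i) := by
        rw [Finset.sum_comm]
    _ = (n : ℝ)⁻¹ * ∑ i : Fin n, ∑ z : Z, w z * h z := by
        rw [Finset.sum_congr rfl fun i _ => hkey i]
    _ = ∑ z : Z, w z * h z := by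
        rw [Finset.sum_const, Finset.card_univ, Fintype.card_fin, nsmul_eq_mul,
          inv_mul_cancel_left₀ (Nat.cast_ne_zero.mpr hn.ne')]



/-- **Unbiasedness of RIPS under the cascade assumption.** If the cascade assumption holds
and `π_b` has full support, then for any evaluation policy `π_e`,
`E_D[V̂_RIPS(π_e; D)] = V(π_e)`. -/
theorem rips_unbiased {L n : ℕ} {X A R : Type*} [Fintype X] [Fintype A] [Fintype R]
    (px : X → ℝ) (πb πe : X → (Fin L → A) → ℝ)
    (κ : Fin L → X → (Fin L → A) → (Fin L → R) → ℝ)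
    (α : Fin L → ℝ) (val : R → ℝ)
    (hn : 0 < n)
    (hpx0 : ∀ x : X, 0 ≤ px x) (hpx1 : ∑ x : X, px x = 1)
    (hb0 : ∀ (x : X) (a : Fin L → A), 0 < πb x a)
    (hb1 : ∀ x : X, ∑ a : Fin L → A, πb x a = 1)
    (he0 : ∀ (x : X) (a : Fin L → A), 0 ≤ πe x a)
    (he1 : ∀ x : X, ∑ a : Fin L → A, πe x a = 1)
    (hα : ∀ l : Fin L, 0 ≤ α l)
    (hκ0 : ∀ (l : Fin L) (x : X) (a : Fin L → A) (r : Fin L → R), 0 ≤ κ l x a r)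
    (hκ1 : ∀ (l : Fin L) (x : X) (a : Fin L → A) (r : Fin L → R),
      ∑ v : R, κ l x a (Function.update r l v) = 1)
    (hcas : Cascade κ) :
    expD px πb (jointR κ)
        (fun D : Fin n → X × (Fin L → A) × (Fin L → R) =>
          (n : ℝ)⁻¹ * ∑ i : Fin n, ripsSample πb πe α val (D i).1 (D i).2.1 (D i).2.2)
      = polValue px πe (jointR κ) α val := by
  classical
  rcases isEmpty_or_nonempty (Fin L → R) with hE | hNE
  · haveI : Nonempty (Fin n) := ⟨⟨0, hn⟩⟩
    haveI : IsEmpty (X × (Fin L → A) × (Fin L → R)) := by infer_instance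
    simp only [expD, polValue]
    simp
  · have hgd : ∀ (x : X) (l : Fin L) (a a' : Fin L → A),
        (∀ k : Fin L, (k : ℕ) ≤ (l : ℕ) → a k = a' k) →
        ∑ r : Fin L → R, jointR κ x a r * val (r l)
          = ∑ r : Fin L → R, jointR κ x a' r * val (r l) :=
      fun x l a a' hpre => gdep κ val hcas x (fun l b r => hκ1 l x b r) l a a' hpre
    have hswap : ∀ (x : X) (a : Fin L → A),
        ∑ r : Fin L → R, jointR κ x a r * ripsSample πb πe α val x a r
          = ∑ l : Fin L, (pmarg πe ((l : ℕ) + 1) x a / pmarg πb ((l : ℕ) + 1) x a)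
              * (α l * ∑ r : Fin L → R, jointR κ x a r * val (r l)) := by
      intro x a
      simp only [ripsSample, Finset.mul_sum]
      rw [Finset.sum_comm]
      refine Finset.sum_congr rfl fun l _ => ?_
      exact Finset.sum_congr rfl fun r _ => by ring
    have hswap2 : ∀ (x : X) (a : Fin L → A),
        ∑ r : Fin L → R, jointR κ x a r * slateReward α val r
          = ∑ l : Fin L, α l * ∑ r : Fin L → R, jointR κ x a r * val (r l) := by
      intro x a
      simp only [slateReward, Finset.mul_sum]
      rw [Finset.sum_comm]
      refine Finset.sum_congr rfl fun l _ => ?_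
      exact Finset.sum_congr rfl fun r _ => by ring
    have hcore : ∀ x : X,
        ∑ a : Fin L → A, πb x a * ∑ r : Fin L → R,
            jointR κ x a r * ripsSample πb πe α val x a r
          = ∑ a : Fin L → A, πe x a * ∑ r : Fin L → R,
              jointR κ x a r * slateReward α val r := by
      intro x
      calc ∑ a : Fin L → A, πb x a * ∑ r : Fin L → R,
              jointR κ x a r * ripsSample πb πe α val x a r
          = ∑ a : Fin L → A, ∑ l : Fin L,
              πb x a * (pmarg πe ((l : ℕ) + 1) x a / pmarg πb ((l : ℕ) + 1) x a)
                * (α l * ∑ r : Fin L → R, jointR κ x a r * val (r l)) := by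
            refine Finset.sum_congr rfl fun a _ => ?_
            rw [hswap x a, Finset.mul_sum]
            exact Finset.sum_congr rfl fun l _ => by ring
        _ = ∑ l : Fin L, ∑ a : Fin L → A,
              πb x a * (pmarg πe ((l : ℕ) + 1) x a / pmarg πb ((l : ℕ) + 1) x a)
                * (α l * ∑ r : Fin L → R, jointR κ x a r * val (r l)) :=
            Finset.sum_comm
        _ = ∑ l : Fin L, ∑ a : Fin L → A,
              πe x a * (α l * ∑ r : Fin L → R, jointR κ x a r * val (r l)) := by
            refine Finset.sum_congr rfl fun l _ => ?_
            exact reweight πb πe x (hb0 x) ((l : ℕ) + 1)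
              (fun a => α l * ∑ r : Fin L → R, jointR κ x a r * val (r l))
              (fun a a' hpre => by
                rw [hgd x l a a' (fun k hk => hpre k (by omega))])
        _ = ∑ a : Fin L → A, ∑ l : Fin L,
              πe x a * (α l * ∑ r : Fin L → R, jointR κ x a r * val (r l)) :=
            Finset.sum_comm
        _ = ∑ a : Fin L → A, πe x a * ∑ r : Fin L → R,
              jointR κ x a r * slateReward α val r := by
            refine Finset.sum_congr rfl fun a _ => ?_
            rw [hswap2 x a, Finset.mul_sum]
    have hZ1 : ∑ z : X × (Fin L → A) × (Fin L → R),
        px z.1 * πb z.1 z.2.1 * jointR κ z.1 z.2.1 z.2.2 = 1 := by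
      simp only [Fintype.sum_prod_type]
      have hxa : ∀ (x : X) (a : Fin L → A),
          ∑ r : Fin L → R, px x * πb x a * jointR κ x a r = px x * πb x a := by
        intro x a
        rw [← Finset.mul_sum,
          jointR_sum κ hcas x a (fun l r => hκ1 l x a r) hNE, mul_one]
      rw [Finset.sum_congr rfl fun x _ => Finset.sum_congr rfl fun a _ => hxa x a]
      rw [Finset.sum_congr rfl fun x _ => (Finset.mul_sum _ _ _).symm]
      rw [Finset.sum_congr rfl fun x (_ : x ∈ Finset.univ) => by rw [hb1 x, mul_one]]
      exact hpx1
    have hsingle : ∑ z : X × (Fin L → A) × (Fin L → R),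
        (px z.1 * πb z.1 z.2.1 * jointR κ z.1 z.2.1 z.2.2)
          * ripsSample πb πe α val z.1 z.2.1 z.2.2
        = polValue px πe (jointR κ) α val := by
      simp only [Fintype.sum_prod_type, polValue]
      refine Finset.sum_congr rfl fun x _ => ?_
      calc ∑ a : Fin L → A, ∑ r : Fin L → R,
              px x * πb x a * jointR κ x a r * ripsSample πb πe α val x a r
          = px x * ∑ a : Fin L → A, πb x a * ∑ r : Fin L → R,
              jointR κ x a r * ripsSample πb πe α val x a r := by
            rw [Finset.mul_sum]
            refine Finset.sum_congr rfl fun a _ => ?_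
            rw [Finset.mul_sum, Finset.mul_sum]
            exact Finset.sum_congr rfl fun r _ => by ring
        _ = px x * ∑ a : Fin L → A, πe x a * ∑ r : Fin L → R,
              jointR κ x a r * slateReward α val r := by rw [hcore x]
    have hred := iid_reduce (n := n) hn
      (fun z : X × (Fin L → A) × (Fin L → R) =>
        px z.1 * πb z.1 z.2.1 * jointR κ z.1 z.2.1 z.2.2)
      (fun z : X × (Fin L → A) × (Fin L → R) =>
        ripsSample πb πe α val z.1 z.2.1 z.2.2) hZ1
    exact hred.trans hsingle
end

section
/- Unbiasedness of IIPS under the independence assumption: if the independence assumption holds and π_b has full support (with strictly positive marginal slot probabilities), then for any evaluation policy π_e, the Independent IPS estimator is unbiased: E_D[V̂_IIPS(π_e; D)] = V(π_e), where E_D denotes expectation over the n i.i.d. logged samples drawn from p(x) π_b(a|x) p(r|x,a). -/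
open Finset Function
open scoped Classical

section Aux

lemma sum_pi_prod {I Z : Type*} [Fintype I] [Fintype Z] [DecidableEq I] (F : I → Z → ℝ) :
    ∑ p : I → Z, ∏ i, F i (p i) = ∏ i, ∑ z, F i z := by
  rw [Finset.prod_univ_sum, Fintype.piFinset_univ]

lemma iid_avg {Z : Type*} [Fintype Z] {n : ℕ} (hn : 0 < n) (μ f : Z → ℝ)
    (hμ : ∑ z, μ z = 1) :
    ∑ D : Fin n → Z, (∏ i, μ (D i)) * ((n : ℝ)⁻¹ * ∑ i, f (D i))
      = ∑ z, μ z * f z := by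
  have key : ∀ i : Fin n, ∑ D : Fin n → Z, (∏ j, μ (D j)) * f (D i) = ∑ z, μ z * f z := by
    intro i
    calc ∑ D : Fin n → Z, (∏ j, μ (D j)) * f (D i)
        = ∑ D : Fin n → Z, ∏ j, (μ (D j) * if j = i then f (D j) else 1) := by
          refine Finset.sum_congr rfl fun D _ => ?_
          rw [Finset.prod_mul_distrib, Finset.prod_ite_eq' Finset.univ i (fun j => f (D j))]
          simp
      _ = ∏ j, ∑ z, (μ z * if j = i then f z else 1) :=
          sum_pi_prod (fun j z => μ z * if j = i then f z else 1)
      _ = ∑ z, μ z * f z := by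
          rw [Finset.prod_eq_single i]
          · simp
          · intro j _ hj; simp [hj, hμ]
          · simp
  have hn' : (n : ℝ) ≠ 0 := Nat.cast_ne_zero.mpr hn.ne'
  calc ∑ D : Fin n → Z, (∏ i, μ (D i)) * ((n : ℝ)⁻¹ * ∑ i, f (D i))
      = ∑ D : Fin n → Z, (n : ℝ)⁻¹ * ∑ i, (∏ j, μ (D j)) * f (D i) := by
        refine Finset.sum_congr rfl fun D _ => ?_
        rw [mul_left_comm, Finset.mul_sum]
    _ = (n : ℝ)⁻¹ * ∑ D : Fin n → Z, ∑ i, (∏ j, μ (D j)) * f (D i) := by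
        rw [Finset.mul_sum]
    _ = (n : ℝ)⁻¹ * ∑ i : Fin n, ∑ D : Fin n → Z, (∏ j, μ (D j)) * f (D i) := by
        rw [Finset.sum_comm]
    _ = (n : ℝ)⁻¹ * ∑ _i : Fin n, ∑ z, μ z * f z := by
        rw [Finset.sum_congr rfl fun i _ => key i]
    _ = ∑ z, μ z * f z := by
        simp [Finset.sum_const, Finset.card_univ, ← mul_assoc, inv_mul_cancel₀ hn']

variable {L : ℕ} {X A R : Type*}

lemma jointR_weighted [Fintype R]
    {κ : Fin L → X → (Fin L → A) → (Fin L → R) → ℝ} (hind : Indep κ)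
    (hκ1 : ∀ (l : Fin L) (x : X) (a : Fin L → A) (r : Fin L → R),
      ∑ v : R, κ l x a (Function.update r l v) = 1)
    (r₀ : Fin L → R) (l : Fin L) (x : X) (a : Fin L → A) (val : R → ℝ) :
    ∑ r : Fin L → R, jointR κ x a r * val (r l)
      = ∑ v : R, κ l x a (Function.update r₀ l v) * val v := by
  calc ∑ r : Fin L → R, jointR κ x a r * val (r l)
      = ∑ r : Fin L → R,
          ∏ k, (κ k x a (Function.update r₀ k (r k)) * if k = l then val (r k) else 1) := by
        refine Finset.sum_congr rfl fun r _ => ?_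
        rw [Finset.prod_mul_distrib, Finset.prod_ite_eq' Finset.univ l (fun k => val (r k))]
        simp only [Finset.mem_univ, if_true]
        congr 1
        exact Finset.prod_congr rfl fun k _ =>
          hind k x a a r (Function.update r₀ k (r k)) rfl (by simp)
    _ = ∏ k, ∑ v, (κ k x a (Function.update r₀ k v) * if k = l then val v else 1) :=
        sum_pi_prod (fun k v => κ k x a (Function.update r₀ k v) * if k = l then val v else 1)
    _ = ∑ v : R, κ l x a (Function.update r₀ l v) * val v := by
        rw [Finset.prod_eq_single l]
        · simp
        · intro k _ hk; simp [hk, hκ1]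
        · simp

lemma jointR_sum_one [Fintype R]
    {κ : Fin L → X → (Fin L → A) → (Fin L → R) → ℝ} (hind : Indep κ)
    (hκ1 : ∀ (l : Fin L) (x : X) (a : Fin L → A) (r : Fin L → R),
      ∑ v : R, κ l x a (Function.update r l v) = 1)
    (r₀ : Fin L → R) (x : X) (a : Fin L → A) :
    ∑ r : Fin L → R, jointR κ x a r = 1 := by
  calc ∑ r : Fin L → R, jointR κ x a r
      = ∑ r : Fin L → R, ∏ k, κ k x a (Function.update r₀ k (r k)) := by
        refine Finset.sum_congr rfl fun r _ => ?_
        exact Finset.prod_congr rfl fun k _ =>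
          hind k x a a r (Function.update r₀ k (r k)) rfl (by simp)
    _ = ∏ k, ∑ v, κ k x a (Function.update r₀ k v) :=
        sum_pi_prod (fun k v => κ k x a (Function.update r₀ k v))
    _ = 1 := by simp [hκ1]

lemma slot_group [Fintype A] (π : X → (Fin L → A) → ℝ)
    (l : Fin L) (x : X) (F : A → ℝ) :
    ∑ a : Fin L → A, π x a * F (a l) = ∑ b : A, slotMarg π l x b * F b := by
  symm
  calc ∑ b : A, slotMarg π l x b * F b
      = ∑ b : A, ∑ a : Fin L → A, (if a l = b then π x a * F b else 0) := by
        refine Finset.sum_congr rfl fun b _ => ?_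
        rw [slotMarg, Finset.sum_mul]
        exact Finset.sum_congr rfl fun a _ => by split <;> simp
    _ = ∑ a : Fin L → A, ∑ b : A, (if a l = b then π x a * F b else 0) := Finset.sum_comm
    _ = ∑ a : Fin L → A, π x a * F (a l) := by
        refine Finset.sum_congr rfl fun a _ => ?_
        simp

end Aux


/-- **Unbiasedness of IIPS under the independence assumption.** If the independence
assumption holds and `π_b` has full support (with strictly positive marginal slot
probabilities), then for any evaluation policy `π_e`, `E_D[V̂_IIPS(π_e; D)] = V(π_e)`. -/
theorem iips_unbiased {L n : ℕ} {X A R : Type*} [Fintype X] [Fintype A] [Fintype R]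
    (px : X → ℝ) (πb πe : X → (Fin L → A) → ℝ)
    (κ : Fin L → X → (Fin L → A) → (Fin L → R) → ℝ)
    (α : Fin L → ℝ) (val : R → ℝ)
    (hn : 0 < n)
    (hpx0 : ∀ x : X, 0 ≤ px x) (hpx1 : ∑ x : X, px x = 1)
    (hb0 : ∀ (x : X) (a : Fin L → A), 0 < πb x a)
    (hb1 : ∀ x : X, ∑ a : Fin L → A, πb x a = 1)
    (hbslot : ∀ (l : Fin L) (x : X) (b : A), 0 < slotMarg πb l x b)
    (he0 : ∀ (x : X) (a : Fin L → A), 0 ≤ πe x a)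
    (he1 : ∀ x : X, ∑ a : Fin L → A, πe x a = 1)
    (hα : ∀ l : Fin L, 0 ≤ α l)
    (hκ0 : ∀ (l : Fin L) (x : X) (a : Fin L → A) (r : Fin L → R), 0 ≤ κ l x a r)
    (hκ1 : ∀ (l : Fin L) (x : X) (a : Fin L → A) (r : Fin L → R),
      ∑ v : R, κ l x a (Function.update r l v) = 1)
    (hind : Indep κ) :
    expD px πb (jointR κ)
        (fun D : Fin n → X × (Fin L → A) × (Fin L → R) =>
          (n : ℝ)⁻¹ * ∑ i : Fin n, iipsSample πb πe α val (D i).1 (D i).2.1 (D i).2.2)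
      = polValue px πe (jointR κ) α val := by
  have hXne : Nonempty X := by
    by_contra h
    rw [not_nonempty_iff] at h
    simp at hpx1
  obtain ⟨x₀⟩ := hXne
  rcases isEmpty_or_nonempty (Fin L → R) with hR | hR
  · haveI : IsEmpty (X × (Fin L → A) × (Fin L → R)) := ⟨fun z => hR.false z.2.2⟩
    haveI : Nonempty (Fin n) := ⟨⟨0, hn⟩⟩
    simp [expD, polValue]
  obtain ⟨r₀⟩ := hR
  have hAne : Nonempty (Fin L → A) := by
    by_contra h
    rw [not_nonempty_iff] at h
    have := hb1 x₀
    simp at this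
  obtain ⟨a₀⟩ := hAne
  set μ : X × (Fin L → A) × (Fin L → R) → ℝ :=
    fun z => px z.1 * πb z.1 z.2.1 * jointR κ z.1 z.2.1 z.2.2 with hμdef
  have hjoint1 : ∀ (x : X) (a : Fin L → A), ∑ r : Fin L → R, jointR κ x a r = 1 :=
    fun x a => jointR_sum_one hind hκ1 r₀ x a
  have hμ1 : ∑ z : X × (Fin L → A) × (Fin L → R), μ z = 1 := by
    calc ∑ z : X × (Fin L → A) × (Fin L → R), μ z
        = ∑ x : X, ∑ a : Fin L → A, ∑ r : Fin L → R, px x * πb x a * jointR κ x a r := by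
          rw [Fintype.sum_prod_type]
          exact Finset.sum_congr rfl fun x _ => Fintype.sum_prod_type _
      _ = ∑ x : X, px x * ∑ a : Fin L → A, πb x a * ∑ r : Fin L → R, jointR κ x a r := by
          simp [Finset.mul_sum, mul_assoc]
      _ = 1 := by simp [hjoint1, hb1, hpx1]
  set q : Fin L → X → A → ℝ :=
    fun l x b => ∑ v : R, κ l x (Function.update a₀ l b) (Function.update r₀ l v) * val v
    with hqdef
  have hq : ∀ (l : Fin L) (x : X) (a : Fin L → A),
      ∑ r : Fin L → R, jointR κ x a r * val (r l) = q l x (a l) := by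
    intro l x a
    rw [jointR_weighted hind hκ1 r₀ l x a val]
    refine Finset.sum_congr rfl fun v _ => ?_
    congr 1
    exact hind l x a (Function.update a₀ l (a l)) _ _ (by simp) rfl
  have hstep1 : ∀ (x : X) (a : Fin L → A),
      ∑ r : Fin L → R, jointR κ x a r * iipsSample πb πe α val x a r
        = ∑ l : Fin L, (slotMarg πe l x (a l) / slotMarg πb l x (a l)) * (α l * q l x (a l)) := by
    intro x a
    have hterm : ∀ l : Fin L,
        ∑ r : Fin L → R, jointR κ x a r *
          ((slotMarg πe l x (a l) / slotMarg πb l x (a l)) * (α l * val (r l)))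
        = (slotMarg πe l x (a l) / slotMarg πb l x (a l)) * (α l * q l x (a l)) := by
      intro l
      rw [← hq l x a, Finset.mul_sum, Finset.mul_sum]
      exact Finset.sum_congr rfl fun r _ => by ring
    simp only [iipsSample, Finset.mul_sum]
    rw [Finset.sum_comm]
    exact Finset.sum_congr rfl fun l _ => hterm l
  have hstep2 : ∀ x : X,
      ∑ a : Fin L → A, πb x a *
        ∑ l : Fin L, (slotMarg πe l x (a l) / slotMarg πb l x (a l)) * (α l * q l x (a l))
        = ∑ l : Fin L, ∑ b : A, slotMarg πe l x b * (α l * q l x b) := by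
    intro x
    simp only [Finset.mul_sum]
    rw [Finset.sum_comm]
    refine Finset.sum_congr rfl fun l _ => ?_
    rw [slot_group πb l x (fun b => (slotMarg πe l x b / slotMarg πb l x b) * (α l * q l x b))]
    refine Finset.sum_congr rfl fun b _ => ?_
    have hb : slotMarg πb l x b ≠ 0 := (hbslot l x b).ne'
    field_simp

  have hstepe : ∀ x : X,
      ∑ a : Fin L → A, πe x a * ∑ r : Fin L → R, jointR κ x a r * slateReward α val r
        = ∑ l : Fin L, ∑ b : A, slotMarg πe l x b * (α l * q l x b) := by
    intro x
    have h1 : ∀ a : Fin L → A,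
        ∑ r : Fin L → R, jointR κ x a r * slateReward α val r
          = ∑ l : Fin L, α l * q l x (a l) := by
      intro a
      have hterm : ∀ l : Fin L,
          ∑ r : Fin L → R, jointR κ x a r * (α l * val (r l)) = α l * q l x (a l) := by
        intro l
        rw [← hq l x a, Finset.mul_sum]
        exact Finset.sum_congr rfl fun r _ => by ring
      simp only [slateReward, Finset.mul_sum]
      rw [Finset.sum_comm]
      exact Finset.sum_congr rfl fun l _ => hterm l
    calc ∑ a : Fin L → A, πe x a * ∑ r : Fin L → R, jointR κ x a r * slateReward α val r
        = ∑ a : Fin L → A, πe x a * ∑ l : Fin L, α l * q l x (a l) :=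
          Finset.sum_congr rfl fun a _ => by rw [h1 a]
      _ = ∑ l : Fin L, ∑ a : Fin L → A, πe x a * (α l * q l x (a l)) := by
          simp only [Finset.mul_sum]; exact Finset.sum_comm
      _ = ∑ l : Fin L, ∑ b : A, slotMarg πe l x b * (α l * q l x b) :=
          Finset.sum_congr rfl fun l _ => slot_group πe l x (fun b => α l * q l x b)
  have hmain : expD px πb (jointR κ)
      (fun D : Fin n → X × (Fin L → A) × (Fin L → R) =>
        (n : ℝ)⁻¹ * ∑ i : Fin n, iipsSample πb πe α val (D i).1 (D i).2.1 (D i).2.2)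
      = ∑ z : X × (Fin L → A) × (Fin L → R),
          μ z * iipsSample πb πe α val z.1 z.2.1 z.2.2 :=
    iid_avg hn μ (fun z => iipsSample πb πe α val z.1 z.2.1 z.2.2) hμ1
  have hfinal : ∑ z : X × (Fin L → A) × (Fin L → R),
        μ z * iipsSample πb πe α val z.1 z.2.1 z.2.2
      = ∑ x : X, px x * ∑ l : Fin L, ∑ b : A, slotMarg πe l x b * (α l * q l x b) := by
    rw [Fintype.sum_prod_type]
    refine Finset.sum_congr rfl fun x _ => ?_
    rw [Fintype.sum_prod_type]
    rw [← hstep2 x, Finset.mul_sum]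
    refine Finset.sum_congr rfl fun a _ => ?_
    rw [← hstep1 x a, Finset.mul_sum, Finset.mul_sum]
    refine Finset.sum_congr rfl fun r _ => ?_
    simp only [hμdef]
    ring
  have hpol : polValue px πe (jointR κ) α val
      = ∑ x : X, px x * ∑ l : Fin L, ∑ b : A, slotMarg πe l x b * (α l * q l x b) := by
    unfold polValue
    exact Finset.sum_congr rfl fun x _ => by rw [hstepe x]
  rw [hmain, hfinal, hpol]
end

section
/- Conditional unbiasedness of the truncated RIPS estimate: under the cascade assumption and full support of π_b, for every l = 1,…,L, E_{b(l)}[E_{b(l+1)}[⋯E_{b(L)}[V̂_RIPS^{L+1-l}]⋯]] = V^{L+1-l}, where all expectations are conditional on (x, a_{1:l-1}, r_{1:l-1}) and V^{L+1-l} = E_l[Σ_{l'=l}^L α_{l'} r_{l'}] is the conditional value of the remaining slots under π_e. -/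
open Finset Function
open scoped Classical

section MyAux

variable {L : ℕ} {X A R : Type*} [Fintype A] [Fintype R]

lemma my_pmarg_nonneg (π : X → (Fin L → A) → ℝ) (hπ : ∀ x a, 0 ≤ π x a)
    (k : ℕ) (x : X) (a : Fin L → A) : 0 ≤ pmarg π k x a := by
  refine Finset.sum_nonneg fun a' _ => ?_
  split
  · exact hπ x a'
  · exact le_refl 0

lemma my_pmarg_pos (π : X → (Fin L → A) → ℝ) (hπ : ∀ x a, 0 < π x a)
    (k : ℕ) (x : X) (a : Fin L → A) : 0 < pmarg π k x a := by
  refine Finset.sum_pos' (fun a' _ => ?_) ⟨a, Finset.mem_univ a, ?_⟩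
  · split
    · exact (hπ x a').le
    · exact le_refl 0
  · rw [if_pos (fun i _ => rfl)]
    exact hπ x a

lemma my_pmarg_congr (π : X → (Fin L → A) → ℝ) (k : ℕ) (x : X) {a a' : Fin L → A}
    (hpre : ∀ i : Fin L, (i : ℕ) < k → a i = a' i) :
    pmarg π k x a = pmarg π k x a' := by
  refine Finset.sum_congr rfl fun b _ => ?_
  refine if_congr ⟨fun hc i hi => (hc i hi).trans (hpre i hi),
    fun hc i hi => (hc i hi).trans (hpre i hi).symm⟩ rfl rfl

lemma my_pmarg_succ_sum (π : X → (Fin L → A) → ℝ) (k : ℕ) (h : k < L) (x : X)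
    (a : Fin L → A) :
    ∑ b : A, pmarg π (k + 1) x (Function.update a ⟨k, h⟩ b) = pmarg π k x a := by
  unfold pmarg
  rw [Finset.sum_comm]
  refine Finset.sum_congr rfl fun a' _ => ?_
  by_cases hc : ∀ i : Fin L, (i : ℕ) < k → a' i = a i
  · rw [if_pos hc, Finset.sum_eq_single (a' ⟨k, h⟩)]
    · rw [if_pos]
      intro i hi
      rcases Nat.lt_succ_iff_lt_or_eq.mp hi with hi' | hi'
      · rw [Function.update_of_ne (fun he => by simp [he] at hi' <;> omega), hc i hi']
      · have : i = ⟨k, h⟩ := Fin.ext hi'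
        subst this
        rw [Function.update_self]
    · intro b _ hb
      rw [if_neg]
      intro hcc
      exact hb (by rw [hcc ⟨k, h⟩ (Nat.lt_succ_self k), Function.update_self])
    · intro hmem
      exact absurd (Finset.mem_univ _) hmem
  · rw [if_neg hc, Finset.sum_eq_zero]
    intro b _
    rw [if_neg]
    intro hcc
    exact hc (fun i hi => by
      rw [hcc i (Nat.lt_succ_of_lt hi), Function.update_of_ne
        (fun he => by simp [he] at hi <;> omega)])

lemma my_pmarg_update (π : X → (Fin L → A) → ℝ) (k : ℕ) (h : k < L) (x : X)
    (a : Fin L → A) (b : A) :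
    pmarg π k x (Function.update a ⟨k, h⟩ b) = pmarg π k x a :=
  my_pmarg_congr π k x (fun i hi =>
    Function.update_of_ne (fun he => by simp [he] at hi <;> omega) _ _)

lemma my_pcond_sum (π : X → (Fin L → A) → ℝ) (k : ℕ) (h : k < L) (x : X)
    (a : Fin L → A) (hne : pmarg π k x a ≠ 0) :
    ∑ b : A, pcond π ⟨k, h⟩ x (Function.update a ⟨k, h⟩ b) = 1 := by
  unfold pcond
  simp only [my_pmarg_update π k h x a]
  rw [← Finset.sum_div, my_pmarg_succ_sum π k h x a, div_self hne]

lemma my_nestE_congr (π : X → (Fin L → A) → ℝ)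
    (κ : Fin L → X → (Fin L → A) → (Fin L → R) → ℝ) :
    ∀ (m k : ℕ) (x : X) (a : Fin L → A) (r : Fin L → R)
      (f g : (Fin L → A) → (Fin L → R) → ℝ),
      (∀ a' r', (∀ i : Fin L, (i : ℕ) < k → a' i = a i) →
        (∀ i : Fin L, (i : ℕ) < k → r' i = r i) → f a' r' = g a' r') →
      nestE π κ m k x a r f = nestE π κ m k x a r g := by
  intro m
  induction m with
  | zero => exact fun k x a r f g hfg => hfg a r (fun _ _ => rfl) (fun _ _ => rfl)
  | succ m ih =>
    intro k x a r f g hfg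
    simp only [nestE]
    split
    · next h =>
      refine Finset.sum_congr rfl fun b _ => Finset.sum_congr rfl fun v _ => ?_
      congr 1
      refine ih (k + 1) x _ _ f g fun a' r' ha hr => hfg a' r' ?_ ?_
      · intro i hi
        rw [ha i (Nat.lt_succ_of_lt hi), Function.update_of_ne
          (fun he => by simp [he] at hi <;> omega)]
      · intro i hi
        rw [hr i (Nat.lt_succ_of_lt hi), Function.update_of_ne
          (fun he => by simp [he] at hi <;> omega)]
    · exact hfg a r (fun _ _ => rfl) (fun _ _ => rfl)

lemma my_nestE_add (π : X → (Fin L → A) → ℝ)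
    (κ : Fin L → X → (Fin L → A) → (Fin L → R) → ℝ) :
    ∀ (m k : ℕ) (x : X) (a : Fin L → A) (r : Fin L → R)
      (f g : (Fin L → A) → (Fin L → R) → ℝ),
      nestE π κ m k x a r (fun a' r' => f a' r' + g a' r')
        = nestE π κ m k x a r f + nestE π κ m k x a r g := by
  intro m
  induction m with
  | zero => intros; rfl
  | succ m ih =>
    intro k x a r f g
    simp only [nestE]
    split
    · rw [← Finset.sum_add_distrib]
      refine Finset.sum_congr rfl fun b _ => ?_
      rw [← Finset.sum_add_distrib]
      refine Finset.sum_congr rfl fun v _ => ?_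
      rw [ih, mul_add]
    · rfl

lemma my_nestE_smul (π : X → (Fin L → A) → ℝ)
    (κ : Fin L → X → (Fin L → A) → (Fin L → R) → ℝ) :
    ∀ (m k : ℕ) (x : X) (a : Fin L → A) (r : Fin L → R) (c : ℝ)
      (f : (Fin L → A) → (Fin L → R) → ℝ),
      nestE π κ m k x a r (fun a' r' => c * f a' r')
        = c * nestE π κ m k x a r f := by
  intro m
  induction m with
  | zero => intros; rfl
  | succ m ih =>
    intro k x a r c f
    simp only [nestE]
    split
    · rw [Finset.mul_sum]
      refine Finset.sum_congr rfl fun b _ => ?_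
      rw [Finset.mul_sum]
      refine Finset.sum_congr rfl fun v _ => ?_
      rw [ih]
      ring
    · rfl

lemma my_nestE_const (π : X → (Fin L → A) → ℝ)
    (κ : Fin L → X → (Fin L → A) → (Fin L → R) → ℝ)
    (hπ : ∀ x a, 0 ≤ π x a)
    (hκ1 : ∀ (l : Fin L) (x : X) (a : Fin L → A) (r : Fin L → R),
      ∑ v : R, κ l x a (Function.update r l v) = 1) :
    ∀ (m k : ℕ) (x : X) (a : Fin L → A) (r : Fin L → R) (c : ℝ),
      pmarg π k x a ≠ 0 →
      nestE π κ m k x a r (fun _ _ => c) = c := by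
  intro m
  induction m with
  | zero => intros; rfl
  | succ m ih =>
    intro k x a r c hne
    simp only [nestE]
    split
    · next h =>
      have step : ∀ b : A, ∀ v : R,
          pcond π ⟨k, h⟩ x (Function.update a ⟨k, h⟩ b) *
            κ ⟨k, h⟩ x (Function.update a ⟨k, h⟩ b) (Function.update r ⟨k, h⟩ v) *
            nestE π κ m (k + 1) x (Function.update a ⟨k, h⟩ b)
              (Function.update r ⟨k, h⟩ v) (fun _ _ => c)
          = pcond π ⟨k, h⟩ x (Function.update a ⟨k, h⟩ b) *
            κ ⟨k, h⟩ x (Function.update a ⟨k, h⟩ b) (Function.update r ⟨k, h⟩ v) * c := by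
        intro b v
        by_cases hp : pcond π ⟨k, h⟩ x (Function.update a ⟨k, h⟩ b) = 0
        · rw [hp]; ring
        · have hnum : pmarg π (k + 1) x (Function.update a ⟨k, h⟩ b) ≠ 0 := by
            intro h0
            exact hp (by unfold pcond; simp only [Fin.val_mk] at *; rw [h0, zero_div])
          rw [ih (k + 1) x _ _ c hnum]
      calc (∑ b : A, ∑ v : R,
          pcond π ⟨k, h⟩ x (Function.update a ⟨k, h⟩ b) *
            κ ⟨k, h⟩ x (Function.update a ⟨k, h⟩ b) (Function.update r ⟨k, h⟩ v) *
            nestE π κ m (k + 1) x (Function.update a ⟨k, h⟩ b)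
              (Function.update r ⟨k, h⟩ v) (fun _ _ => c))
          = ∑ b : A, pcond π ⟨k, h⟩ x (Function.update a ⟨k, h⟩ b) * c := by
            refine Finset.sum_congr rfl fun b _ => ?_
            rw [Finset.sum_congr rfl fun v _ => step b v]
            rw [show (∑ v : R, pcond π ⟨k, h⟩ x (Function.update a ⟨k, h⟩ b) *
              κ ⟨k, h⟩ x (Function.update a ⟨k, h⟩ b) (Function.update r ⟨k, h⟩ v) * c)
              = pcond π ⟨k, h⟩ x (Function.update a ⟨k, h⟩ b) *
                (∑ v : R, κ ⟨k, h⟩ x (Function.update a ⟨k, h⟩ b)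
                  (Function.update r ⟨k, h⟩ v)) * c by
                rw [Finset.mul_sum, Finset.sum_mul] <;> exact Finset.sum_congr rfl fun v _ => by ring]
            rw [hκ1, mul_one]
        _ = c := by
            rw [← Finset.sum_mul, my_pcond_sum π k h x a hne, one_mul]
    · rfl

lemma my_split_sum (k : ℕ) (h : k < L) (t : Fin L → ℝ) :
    ∑ l : Fin L, (if k ≤ (l : ℕ) then t l else 0)
      = t ⟨k, h⟩ + ∑ l : Fin L, (if k + 1 ≤ (l : ℕ) then t l else 0) := by
  have key : ∀ l : Fin L, (if k ≤ (l : ℕ) then t l else 0)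
      = (if l = ⟨k, h⟩ then t l else 0) + (if k + 1 ≤ (l : ℕ) then t l else 0) := by
    intro l
    by_cases hl : (l : ℕ) = k
    · have hle : l = ⟨k, h⟩ := Fin.ext hl
      simp [hle, show ¬ (k + 1 ≤ k) by omega]
    · by_cases h2 : k ≤ (l : ℕ)
      · have h3 : k + 1 ≤ (l : ℕ) := by omega
        have h4 : l ≠ ⟨k, h⟩ := fun he => hl (by rw [he])
        simp [h2, h3, h4]
      · have h3 : ¬ (k + 1 ≤ (l : ℕ)) := by omega
        have h4 : l ≠ ⟨k, h⟩ := fun he => hl (by rw [he])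
        simp [h2, h3, h4]
  rw [Finset.sum_congr rfl fun l _ => key l, Finset.sum_add_distrib,
    Finset.sum_ite_eq' Finset.univ ⟨k, h⟩ t, if_pos (Finset.mem_univ _)]

/-- Lemma A: the nested behavior-policy expectation of the recursive RIPS estimate
equals the nested value recursion under the evaluation policy. -/
lemma my_ripsA (πb πe : X → (Fin L → A) → ℝ)
    (κ : Fin L → X → (Fin L → A) → (Fin L → R) → ℝ)
    (α : Fin L → ℝ) (val : R → ℝ)
    (hb0 : ∀ (x : X) (a : Fin L → A), 0 < πb x a)
    (hκ1 : ∀ (l : Fin L) (x : X) (a : Fin L → A) (r : Fin L → R),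
      ∑ v : R, κ l x a (Function.update r l v) = 1) :
    ∀ (m k : ℕ) (x : X) (a : Fin L → A) (r : Fin L → R),
      nestE πb κ m k x a r (fun a' r' => ripsRec πb πe α val m k x a' r')
        = nestedVal πe κ α val m k x a r := by
  intro m
  induction m with
  | zero => intros; rfl
  | succ m ih =>
    intro k x a r
    simp only [nestE, nestedVal]
    split
    · next h =>
      refine Finset.sum_congr rfl fun b _ => Finset.sum_congr rfl fun v _ => ?_
      set ua := Function.update a ⟨k, h⟩ b with hua
      set ur := Function.update r ⟨k, h⟩ v with hur
      have hcongr : nestE πb κ m (k + 1) x ua ur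
          (fun a' r' => ripsRec πb πe α val (m + 1) k x a' r')
          = nestE πb κ m (k + 1) x ua ur
          (fun a' r' => wstep πb πe ⟨k, h⟩ x ua *
            (α ⟨k, h⟩ * val v + ripsRec πb πe α val m (k + 1) x a' r')) := by
        refine my_nestE_congr πb κ m (k + 1) x ua ur _ _ fun a' r' ha hr => ?_
        have hw : wstep πb πe ⟨k, h⟩ x a' = wstep πb πe ⟨k, h⟩ x ua := by
          unfold wstep pcond
          rw [my_pmarg_congr πe _ x (fun i hi => ha i (by simpa using hi)),
            my_pmarg_congr πb _ x (fun i hi => ha i (by simpa using hi)),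
            my_pmarg_congr πe (((⟨k, h⟩ : Fin L) : ℕ)) x
              (fun i hi => ha i (by simp at hi ⊢ <;> omega)),
            my_pmarg_congr πb (((⟨k, h⟩ : Fin L) : ℕ)) x
              (fun i hi => ha i (by simp at hi ⊢ <;> omega))]
        have hrv : r' ⟨k, h⟩ = v := by
          rw [hr ⟨k, h⟩ (by simp), hur, Function.update_self]
        show ripsRec πb πe α val (m + 1) k x a' r' = _
        simp only [ripsRec]
        rw [dif_pos h, hw, hrv]
      rw [hcongr, my_nestE_smul, my_nestE_add,
        my_nestE_const πb κ (fun x a => (hb0 x a).le) hκ1 m (k + 1) x ua ur _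
          (ne_of_gt (my_pmarg_pos πb hb0 (k + 1) x ua)),
        ih (k + 1) x ua ur]
      have hpb : pcond πb ⟨k, h⟩ x ua ≠ 0 := by
        have h1 := my_pmarg_pos πb hb0 (((⟨k, h⟩ : Fin L) : ℕ) + 1) x ua
        have h2 := my_pmarg_pos πb hb0 (((⟨k, h⟩ : Fin L) : ℕ)) x ua
        exact ne_of_gt (div_pos h1 h2)
      have hcancel : pcond πb ⟨k, h⟩ x ua * wstep πb πe ⟨k, h⟩ x ua
          = pcond πe ⟨k, h⟩ x ua := by
        unfold wstep
        rw [mul_comm, div_mul_cancel₀ _ hpb]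
      rw [← hcancel]
      ring
    · next hnk =>
      show ripsRec πb πe α val (m + 1) k x a r = 0
      simp only [ripsRec]
      rw [dif_neg hnk]

/-- Lemma B: the remaining value equals the nested value recursion. -/
lemma my_ripsB (πe : X → (Fin L → A) → ℝ)
    (κ : Fin L → X → (Fin L → A) → (Fin L → R) → ℝ)
    (α : Fin L → ℝ) (val : R → ℝ)
    (he0 : ∀ (x : X) (a : Fin L → A), 0 ≤ πe x a)
    (hκ1 : ∀ (l : Fin L) (x : X) (a : Fin L → A) (r : Fin L → R),
      ∑ v : R, κ l x a (Function.update r l v) = 1) :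
    ∀ (m k : ℕ), L ≤ k + m → ∀ (x : X) (a : Fin L → A) (r : Fin L → R),
      nestE πe κ m k x a r
          (fun _ r' => ∑ l : Fin L, if k ≤ (l : ℕ) then α l * val (r' l) else 0)
        = nestedVal πe κ α val m k x a r := by
  intro m
  induction m with
  | zero =>
    intro k hk x a r
    show (∑ l : Fin L, if k ≤ (l : ℕ) then α l * val (r l) else 0) = 0
    exact Finset.sum_eq_zero fun l _ => if_neg (by have := l.isLt; omega)
  | succ m ih =>
    intro k hk x a r
    simp only [nestE, nestedVal]
    split
    · next h =>
      refine Finset.sum_congr rfl fun b _ => Finset.sum_congr rfl fun v _ => ?_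
      set ua := Function.update a ⟨k, h⟩ b with hua
      set ur := Function.update r ⟨k, h⟩ v with hur
      have hcongr : nestE πe κ m (k + 1) x ua ur
          (fun _ r' => ∑ l : Fin L, if k ≤ (l : ℕ) then α l * val (r' l) else 0)
          = nestE πe κ m (k + 1) x ua ur
          (fun a' r' => α ⟨k, h⟩ * val v +
            ∑ l : Fin L, if k + 1 ≤ (l : ℕ) then α l * val (r' l) else 0) := by
        refine my_nestE_congr πe κ m (k + 1) x ua ur _ _ fun a' r' ha hr => ?_
        have hrv : r' ⟨k, h⟩ = v := by
          rw [hr ⟨k, h⟩ (by simp), hur, Function.update_self]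
        rw [my_split_sum k h, hrv]
      rw [hcongr, my_nestE_add, ih (k + 1) (by omega) x ua ur]
      by_cases hp : pcond πe ⟨k, h⟩ x ua = 0
      · rw [hp]; ring
      · have hnum : pmarg πe (k + 1) x ua ≠ 0 := by
          intro h0
          exact hp (by unfold pcond; simp only [Fin.val_mk] at *; rw [h0, zero_div])
        rw [my_nestE_const πe κ he0 hκ1 m (k + 1) x ua ur _ hnum]
    · next h =>
      show (∑ l : Fin L, if k ≤ (l : ℕ) then α l * val (r l) else 0) = 0
      exact Finset.sum_eq_zero fun l _ => if_neg (by have := l.isLt; omega)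

end MyAux


/-- **Conditional unbiasedness of the truncated RIPS estimate.** Under the cascade
assumption and full support of `π_b`, for every slot `l` (0-indexed `k`),
`E_{b(l)}[⋯E_{b(L)}[V̂_RIPS^{L+1-l}]] = V^{L+1-l}`, all conditional on
`(x, a_{1:l-1}, r_{1:l-1})`. -/
theorem rips_conditional_unbiased {L : ℕ} {X A R : Type*} [Fintype A] [Fintype R]
    (πb πe : X → (Fin L → A) → ℝ)
    (κ : Fin L → X → (Fin L → A) → (Fin L → R) → ℝ)
    (α : Fin L → ℝ) (val : R → ℝ)
    (hb0 : ∀ (x : X) (a : Fin L → A), 0 < πb x a)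
    (hb1 : ∀ x : X, ∑ a : Fin L → A, πb x a = 1)
    (he0 : ∀ (x : X) (a : Fin L → A), 0 ≤ πe x a)
    (he1 : ∀ x : X, ∑ a : Fin L → A, πe x a = 1)
    (hα : ∀ l : Fin L, 0 ≤ α l)
    (hκ0 : ∀ (l : Fin L) (x : X) (a : Fin L → A) (r : Fin L → R), 0 ≤ κ l x a r)
    (hκ1 : ∀ (l : Fin L) (x : X) (a : Fin L → A) (r : Fin L → R),
      ∑ v : R, κ l x a (Function.update r l v) = 1)
    (hcas : Cascade κ) :
    ∀ (k : Fin L) (x : X) (a : Fin L → A) (r : Fin L → R),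
      nestE πb κ (L - (k : ℕ)) (k : ℕ) x a r
          (fun a' r' => ripsRec πb πe α val (L - (k : ℕ)) (k : ℕ) x a' r')
        = remVal πe κ α val (k : ℕ) x a r := by
  intro k x a r
  rw [my_ripsA πb πe κ α val hb0 hκ1 (L - (k : ℕ)) (k : ℕ) x a r]
  unfold remVal condE
  exact (my_ripsB πe κ α val he0 hκ1 (L - (k : ℕ)) (k : ℕ)
    (by have := k.isLt; omega) x a r).symm
end

section
/- Last-slot variance comparison between Cascade-DR and RIPS: under the cascade assumption and full support of π_b, at the final slot l = L (where V̂_RIPS^0 = V̂_CDR^0 = 0 and V^0 = 0 and hence Q_L = α_L q_L(x, a_{1:L})), the conditional variances satisfy V_L(V̂_RIPS^1) = α_L² E_L[w_{1:L}(L)² V_{r_L}(r_L)] + V_L(w_{1:L}(L) Q_L) and V_L(V̂_CDR^1) = α_L² E_L[w_{1:L}(L)² V_{r_L}(r_L)] + V_L(w_{1:L}(L) (Q_L − Q̂_L)); consequently V_L(V̂_CDR^1) − V_L(V̂_RIPS^1) = V_L(w_{1:L}(L)(Q_L − Q̂_L)) − V_L(w_{1:L}(L) Q_L), so Cascade-DR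 has no larger conditional last-slot variance than RIPS whenever V_L(w_{1:L}(L)(Q_L − Q̂_L)) ≤ V_L(w_{1:L}(L) Q_L). -/
open Finset Function
open scoped Classical

section AuxLemmas

variable {L : ℕ} {X A R : Type*}

lemma pmarg_top [Fintype A] (π : X → (Fin L → A) → ℝ) (x : X) (a : Fin L → A) :
    pmarg π L x a = π x a := by
  unfold pmarg
  have h : ∀ a' : Fin L → A, (if ∀ i : Fin L, (i:ℕ) < L → a' i = a i then π x a' else 0)
      = if a' = a then π x a' else 0 :=
    fun a' => if_congr ⟨fun h => funext fun i => h i i.isLt, fun h i _ => congrFun h i⟩ rfl rfl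
  rw [Finset.sum_congr rfl fun a' _ => h a', Finset.sum_ite_eq' Finset.univ a (π x),
    if_pos (Finset.mem_univ a)]

lemma pmarg_update [Fintype A] (π : X → (Fin L → A) → ℝ) (lL : Fin L) (x : X)
    (a : Fin L → A) (b : A) :
    pmarg π (lL:ℕ) x (Function.update a lL b) = pmarg π (lL:ℕ) x a := by
  unfold pmarg
  refine Finset.sum_congr rfl fun a' _ => if_congr ⟨fun h i hi => ?_, fun h i hi => ?_⟩ rfl rfl
  · have hne : i ≠ lL := fun hh => by rw [hh] at hi; exact lt_irrefl _ hi
    rw [h i hi, Function.update_of_ne hne]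
  · have hne : i ≠ lL := fun hh => by rw [hh] at hi; exact lt_irrefl _ hi
    rw [Function.update_of_ne hne]; exact h i hi

lemma pmarg_penult_sum [Fintype A] (π : X → (Fin L → A) → ℝ) (lL : Fin L)
    (hlL : (lL : ℕ) = L - 1) (x : X) (a : Fin L → A) :
    pmarg π (lL : ℕ) x a = ∑ b : A, π x (Function.update a lL b) := by
  unfold pmarg
  have key : ∀ a' : Fin L → A,
      (if ∀ i : Fin L, (i : ℕ) < (lL : ℕ) → a' i = a i then π x a' else 0)
        = ∑ b : A, if a' = Function.update a lL b then π x a' else 0 := by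
    intro a'
    have hs : (∑ b : A, if a' = Function.update a lL b then π x a' else 0)
        = if a' = Function.update a lL (a' lL) then π x a' else 0 :=
      Finset.sum_eq_single (a' lL)
        (fun b _ hb => if_neg fun h =>
          hb (((congrFun h lL).trans (Function.update_self lL b a)).symm))
        (fun h => absurd (Finset.mem_univ _) h)
    rw [hs]
    refine if_congr ⟨fun h => ?_, fun h i hi => ?_⟩ rfl rfl
    · funext i
      by_cases hi : i = lL
      · subst hi; rw [Function.update_self]
      · have h1 : (i:ℕ) ≠ (lL:ℕ) := fun hh => hi (Fin.ext hh)
        have h2 : (i:ℕ) < L := i.isLt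
        rw [Function.update_of_ne hi]
        exact h i (by omega)
    · have hne : i ≠ lL := fun hh => by rw [hh] at hi; exact lt_irrefl _ hi
      rw [h, Function.update_of_ne hne]
  rw [Finset.sum_congr rfl fun a' _ => key a', Finset.sum_comm]
  exact Finset.sum_congr rfl fun b _ => by
    rw [Finset.sum_ite_eq' Finset.univ (Function.update a lL b) (π x),
      if_pos (Finset.mem_univ _)]

end AuxLemmas


/-- **Last-slot variance comparison between Cascade-DR and RIPS.** Under the cascade
assumption and full support of `π_b`, at the final slot `l = L` (where
`V̂_RIPS^0 = V̂_CDR^0 = 0`, `V^0 = 0` and hence `Q_L = α_L q_L(x, a_{1:L})`), the stated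
conditional variance decompositions hold, the difference of variances equals
`V_L(w(Q_L − Q̂_L)) − V_L(w Q_L)`, and hence Cascade-DR has no larger conditional
last-slot variance than RIPS whenever `V_L(w(Q_L − Q̂_L)) ≤ V_L(w Q_L)`. -/
theorem last_slot_variance_comparison {L : ℕ} {X A R : Type*} [Fintype A] [Fintype R]
    (πb πe : X → (Fin L → A) → ℝ)
    (κ : Fin L → X → (Fin L → A) → (Fin L → R) → ℝ)
    (Qhat : Fin L → X → (Fin L → A) → ℝ) (α : Fin L → ℝ) (val : R → ℝ)
    (hL : 0 < L)
    (hb0 : ∀ (x : X) (a : Fin L → A), 0 < πb x a)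
    (hb1 : ∀ x : X, ∑ a : Fin L → A, πb x a = 1)
    (he0 : ∀ (x : X) (a : Fin L → A), 0 ≤ πe x a)
    (he1 : ∀ x : X, ∑ a : Fin L → A, πe x a = 1)
    (hα : ∀ l : Fin L, 0 ≤ α l)
    (hκ0 : ∀ (l : Fin L) (x : X) (a : Fin L → A) (r : Fin L → R), 0 ≤ κ l x a r)
    (hκ1 : ∀ (l : Fin L) (x : X) (a : Fin L → A) (r : Fin L → R),
      ∑ v : R, κ l x a (Function.update r l v) = 1)
    (hcas : Cascade κ) :
    ∀ (lL : Fin L), (lL : ℕ) = L - 1 →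
      ∀ (x : X) (a : Fin L → A) (r : Fin L → R),
        (condVar πe κ (lL : ℕ) x a r
              (fun a' r' => ripsRec πb πe α val 1 (lL : ℕ) x a' r')
            = α lL ^ 2 *
                condE πe κ (lL : ℕ) x a r
                  (fun a' r' => wstep πb πe lL x a' ^ 2 * varSlot κ val lL x a' r')
              + condVar πe κ (lL : ℕ) x a r
                  (fun a' r' => wstep πb πe lL x a' * (α lL * qslot κ val lL x a' r')))
        ∧ (condVar πe κ (lL : ℕ) x a r
              (fun a' r' => cdrRec πb πe Qhat α val 1 (lL : ℕ) x a' r')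
            = α lL ^ 2 *
                condE πe κ (lL : ℕ) x a r
                  (fun a' r' => wstep πb πe lL x a' ^ 2 * varSlot κ val lL x a' r')
              + condVar πe κ (lL : ℕ) x a r
                  (fun a' r' =>
                    wstep πb πe lL x a' * (α lL * qslot κ val lL x a' r' - Qhat lL x a')))
        ∧ (condVar πe κ (lL : ℕ) x a r
                (fun a' r' => cdrRec πb πe Qhat α val 1 (lL : ℕ) x a' r')
              - condVar πe κ (lL : ℕ) x a r
                  (fun a' r' => ripsRec πb πe α val 1 (lL : ℕ) x a' r')
            = condVar πe κ (lL : ℕ) x a r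
                  (fun a' r' =>
                    wstep πb πe lL x a' * (α lL * qslot κ val lL x a' r' - Qhat lL x a'))
              - condVar πe κ (lL : ℕ) x a r
                  (fun a' r' => wstep πb πe lL x a' * (α lL * qslot κ val lL x a' r')))
        ∧ (condVar πe κ (lL : ℕ) x a r
                (fun a' r' =>
                  wstep πb πe lL x a' * (α lL * qslot κ val lL x a' r' - Qhat lL x a'))
              ≤ condVar πe κ (lL : ℕ) x a r
                  (fun a' r' => wstep πb πe lL x a' * (α lL * qslot κ val lL x a' r')) →
            condVar πe κ (lL : ℕ) x a r
                (fun a' r' => cdrRec πb πe Qhat α val 1 (lL : ℕ) x a' r')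
              ≤ condVar πe κ (lL : ℕ) x a r
                  (fun a' r' => ripsRec πb πe α val 1 (lL : ℕ) x a' r')) := by
  intro lL hlL x a r
  have hkL : (lL:ℕ) < L := lL.isLt
  have hk1 : (lL:ℕ) + 1 = L := by omega
  have hLk : L - (lL:ℕ) = 1 := by omega
  set Pb : A → ℝ := fun b => pcond πe lL x (Function.update a lL b) with hPb
  set Kb : A → R → ℝ := fun b v => κ lL x (Function.update a lL b) (Function.update r lL v)
    with hKb
  set Wb : A → ℝ := fun b => wstep πb πe lL x (Function.update a lL b) with hWb
  set qb : A → ℝ := fun b => ∑ v : R, Kb b v * val v with hqb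
  set s2b : A → ℝ := fun b => ∑ v : R, Kb b v * val v ^ 2 with hs2b
  set Qb : A → ℝ := fun b => Qhat lL x (Function.update a lL b) with hQb
  set Cc : ℝ := ∑ b : A, Pb b * Qb b with hCc
  have hK1 : ∀ b : A, ∑ v : R, Kb b v = 1 := fun b => by
    simp only [hKb]; exact hκ1 lL x _ r
  have hcondE : ∀ f : (Fin L → A) → (Fin L → R) → ℝ,
      condE πe κ (lL:ℕ) x a r f
        = ∑ b : A, ∑ v : R,
            Pb b * Kb b v * f (Function.update a lL b) (Function.update r lL v) := by
    intro f
    unfold condE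
    rw [hLk]
    simp only [nestE, dif_pos hkL, Fin.eta, hPb, hKb]
  have inner : ∀ (b : A) (c2 c1 c0 : ℝ),
      ∑ v : R, Kb b v * (c2 * val v ^ 2 + c1 * val v + c0)
        = c2 * s2b b + c1 * qb b + c0 := by
    intro b c2 c1 c0
    calc ∑ v : R, Kb b v * (c2 * val v ^ 2 + c1 * val v + c0)
        = ∑ v : R, (c2 * (Kb b v * val v ^ 2) + c1 * (Kb b v * val v) + c0 * Kb b v) :=
          Finset.sum_congr rfl fun v _ => by ring
      _ = c2 * ∑ v : R, Kb b v * val v ^ 2 + c1 * ∑ v : R, Kb b v * val v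
            + c0 * ∑ v : R, Kb b v := by
          rw [Finset.sum_add_distrib, Finset.sum_add_distrib, Finset.mul_sum,
            Finset.mul_sum, Finset.mul_sum]
      _ = c2 * s2b b + c1 * qb b + c0 := by
          rw [hK1 b, mul_one]
  have master : ∀ (f : (Fin L → A) → (Fin L → R) → ℝ) (c2 c1 c0 : A → ℝ),
      (∀ b v, f (Function.update a lL b) (Function.update r lL v)
          = c2 b * val v ^ 2 + c1 b * val v + c0 b) →
      condE πe κ (lL:ℕ) x a r f
        = ∑ b : A, Pb b * (c2 b * s2b b + c1 b * qb b + c0 b) := by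
    intro f c2 c1 c0 hf
    rw [hcondE f]
    refine Finset.sum_congr rfl fun b _ => ?_
    rw [← inner b (c2 b) (c1 b) (c0 b), Finset.mul_sum]
    exact Finset.sum_congr rfl fun v _ => by rw [hf b v]; ring
  have hqslot : ∀ (b : A) (v : R),
      qslot κ val lL x (Function.update a lL b) (Function.update r lL v) = qb b := by
    intro b v
    simp only [qslot, hqb, hKb]
    exact Finset.sum_congr rfl fun v' _ => by rw [Function.update_idem]
  have hvarSlot : ∀ (b : A) (v : R),
      varSlot κ val lL x (Function.update a lL b) (Function.update r lL v)
        = s2b b - qb b ^ 2 := by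
    intro b v
    have h1 : (∑ v' : R, κ lL x (Function.update a lL b)
          (Function.update (Function.update r lL v) lL v') * val v' ^ 2) = s2b b := by
      simp only [hs2b, hKb]
      exact Finset.sum_congr rfl fun v' _ => by rw [Function.update_idem]
    simp only [varSlot]
    rw [h1, hqslot b v]
  have hrips : ∀ (b : A) (v : R),
      ripsRec πb πe α val 1 (lL:ℕ) x (Function.update a lL b) (Function.update r lL v)
        = Wb b * (α lL * val v) := by
    intro b v
    simp only [ripsRec, dif_pos hkL, Fin.eta, hWb, Function.update_self, add_zero]
  have hcdr : ∀ (b : A) (v : R),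
      cdrRec πb πe Qhat α val 1 (lL:ℕ) x (Function.update a lL b) (Function.update r lL v)
        = Wb b * (α lL * val v - Qb b) + Cc := by
    intro b v
    simp only [cdrRec, dif_pos hkL, Fin.eta, Function.update_self, add_zero,
      Function.update_idem, hWb, hQb, hCc, hPb]
  have e_rips : condE πe κ (lL:ℕ) x a r
        (fun a' r' => ripsRec πb πe α val 1 (lL:ℕ) x a' r')
      = ∑ b : A, Pb b * (Wb b * (α lL * qb b)) := by
    rw [master _ (fun _ => 0) (fun b => Wb b * α lL) (fun _ => 0)
      (fun b v => by rw [hrips b v]; ring)]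
    exact Finset.sum_congr rfl fun b _ => by ring
  have e_rips2 : condE πe κ (lL:ℕ) x a r
        (fun a' r' => ripsRec πb πe α val 1 (lL:ℕ) x a' r' ^ 2)
      = ∑ b : A, Pb b * (Wb b ^ 2 * (α lL ^ 2 * s2b b)) := by
    rw [master _ (fun b => Wb b ^ 2 * α lL ^ 2) (fun _ => 0) (fun _ => 0)
      (fun b v => by rw [hrips b v]; ring)]
    exact Finset.sum_congr rfl fun b _ => by ring
  have e_var : condE πe κ (lL:ℕ) x a r
        (fun a' r' => wstep πb πe lL x a' ^ 2 * varSlot κ val lL x a' r')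
      = ∑ b : A, Pb b * (Wb b ^ 2 * (s2b b - qb b ^ 2)) := by
    rw [master _ (fun _ => 0) (fun _ => 0) (fun b => Wb b ^ 2 * (s2b b - qb b ^ 2))
      (fun b v => by simp only [hWb]; rw [hvarSlot b v]; ring)]
    exact Finset.sum_congr rfl fun b _ => by ring
  have e_wq : condE πe κ (lL:ℕ) x a r
        (fun a' r' => wstep πb πe lL x a' * (α lL * qslot κ val lL x a' r'))
      = ∑ b : A, Pb b * (Wb b * (α lL * qb b)) := by
    rw [master _ (fun _ => 0) (fun _ => 0) (fun b => Wb b * (α lL * qb b))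
      (fun b v => by simp only [hWb]; rw [hqslot b v]; ring)]
    exact Finset.sum_congr rfl fun b _ => by ring
  have e_wq2 : condE πe κ (lL:ℕ) x a r
        (fun a' r' => (wstep πb πe lL x a' * (α lL * qslot κ val lL x a' r')) ^ 2)
      = ∑ b : A, Pb b * (Wb b * (α lL * qb b)) ^ 2 := by
    rw [master _ (fun _ => 0) (fun _ => 0) (fun b => (Wb b * (α lL * qb b)) ^ 2)
      (fun b v => by simp only [hWb]; rw [hqslot b v]; ring)]
    exact Finset.sum_congr rfl fun b _ => by ring
  have e_wqQ : condE πe κ (lL:ℕ) x a r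
        (fun a' r' => wstep πb πe lL x a' * (α lL * qslot κ val lL x a' r' - Qhat lL x a'))
      = ∑ b : A, Pb b * (Wb b * (α lL * qb b - Qb b)) := by
    rw [master _ (fun _ => 0) (fun _ => 0) (fun b => Wb b * (α lL * qb b - Qb b))
      (fun b v => by simp only [hWb, hQb]; rw [hqslot b v]; ring)]
    exact Finset.sum_congr rfl fun b _ => by ring
  have e_wqQ2 : condE πe κ (lL:ℕ) x a r
        (fun a' r' =>
          (wstep πb πe lL x a' * (α lL * qslot κ val lL x a' r' - Qhat lL x a')) ^ 2)
      = ∑ b : A, Pb b * (Wb b * (α lL * qb b - Qb b)) ^ 2 := by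
    rw [master _ (fun _ => 0) (fun _ => 0) (fun b => (Wb b * (α lL * qb b - Qb b)) ^ 2)
      (fun b v => by simp only [hWb, hQb]; rw [hqslot b v]; ring)]
    exact Finset.sum_congr rfl fun b _ => by ring
  have e_cdr : condE πe κ (lL:ℕ) x a r
        (fun a' r' => cdrRec πb πe Qhat α val 1 (lL:ℕ) x a' r')
      = (∑ b : A, Pb b * (Wb b * (α lL * qb b - Qb b))) + Cc * ∑ b : A, Pb b := by
    rw [master _ (fun _ => 0) (fun b => Wb b * α lL) (fun b => Cc - Wb b * Qb b)
      (fun b v => by rw [hcdr b v]; ring)]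
    calc ∑ b : A, Pb b * (0 * s2b b + Wb b * α lL * qb b + (Cc - Wb b * Qb b))
        = ∑ b : A, (Pb b * (Wb b * (α lL * qb b - Qb b)) + Cc * Pb b) :=
          Finset.sum_congr rfl fun b _ => by ring
      _ = _ := by rw [Finset.sum_add_distrib, ← Finset.mul_sum]
  have e_cdr2 : condE πe κ (lL:ℕ) x a r
        (fun a' r' => cdrRec πb πe Qhat α val 1 (lL:ℕ) x a' r' ^ 2)
      = ∑ b : A, Pb b * (Wb b ^ 2 * α lL ^ 2 * s2b b
          + 2 * Wb b * α lL * (Cc - Wb b * Qb b) * qb b + (Cc - Wb b * Qb b) ^ 2) := by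
    rw [master _ (fun b => Wb b ^ 2 * α lL ^ 2)
      (fun b => 2 * Wb b * α lL * (Cc - Wb b * Qb b)) (fun b => (Cc - Wb b * Qb b) ^ 2)
      (fun b v => by rw [hcdr b v]; ring)]
  have hCT : Cc * (1 - ∑ b : A, Pb b) = 0 := by
    by_cases hpm : pmarg πe (lL:ℕ) x a = 0
    · have hP0 : ∀ b : A, Pb b = 0 := by
        intro b
        simp only [hPb]
        unfold pcond
        rw [pmarg_update, hpm, div_zero]
      have hC0 : Cc = 0 := by
        rw [hCc]
        exact Finset.sum_eq_zero fun b _ => by rw [hP0 b, zero_mul]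
      rw [hC0, zero_mul]
    · have hT : ∑ b : A, Pb b = 1 := by
        have hb : ∀ b : A, Pb b = πe x (Function.update a lL b) / pmarg πe (lL:ℕ) x a := by
          intro b
          simp only [hPb]
          unfold pcond
          rw [pmarg_update, hk1, pmarg_top]
        rw [Finset.sum_congr rfl fun b _ => hb b, ← Finset.sum_div,
          ← pmarg_penult_sum πe lL hlL x a, div_self hpm]
      rw [hT]; ring
  have G1 : condVar πe κ (lL:ℕ) x a r
        (fun a' r' => ripsRec πb πe α val 1 (lL:ℕ) x a' r')
      = α lL ^ 2 * condE πe κ (lL:ℕ) x a r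
          (fun a' r' => wstep πb πe lL x a' ^ 2 * varSlot κ val lL x a' r')
        + condVar πe κ (lL:ℕ) x a r
            (fun a' r' => wstep πb πe lL x a' * (α lL * qslot κ val lL x a' r')) := by
    simp only [condVar]
    rw [e_rips2, e_rips, e_var, e_wq2, e_wq]
    have key : ∑ b : A, Pb b * (Wb b ^ 2 * (α lL ^ 2 * s2b b))
        = α lL ^ 2 * ∑ b : A, Pb b * (Wb b ^ 2 * (s2b b - qb b ^ 2))
          + ∑ b : A, Pb b * (Wb b * (α lL * qb b)) ^ 2 := by
      rw [Finset.mul_sum, ← Finset.sum_add_distrib]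
      exact Finset.sum_congr rfl fun b _ => by ring
    linarith [key]
  have G2 : condVar πe κ (lL:ℕ) x a r
        (fun a' r' => cdrRec πb πe Qhat α val 1 (lL:ℕ) x a' r')
      = α lL ^ 2 * condE πe κ (lL:ℕ) x a r
          (fun a' r' => wstep πb πe lL x a' ^ 2 * varSlot κ val lL x a' r')
        + condVar πe κ (lL:ℕ) x a r
            (fun a' r' =>
              wstep πb πe lL x a' * (α lL * qslot κ val lL x a' r' - Qhat lL x a')) := by
    simp only [condVar]
    rw [e_cdr2, e_cdr, e_var, e_wqQ2, e_wqQ]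
    have expand : ∑ b : A, Pb b * (Wb b ^ 2 * α lL ^ 2 * s2b b
          + 2 * Wb b * α lL * (Cc - Wb b * Qb b) * qb b + (Cc - Wb b * Qb b) ^ 2)
        = α lL ^ 2 * (∑ b : A, Pb b * (Wb b ^ 2 * (s2b b - qb b ^ 2)))
          + (∑ b : A, Pb b * (Wb b * (α lL * qb b - Qb b)) ^ 2)
          + 2 * Cc * (∑ b : A, Pb b * (Wb b * (α lL * qb b - Qb b)))
          + Cc ^ 2 * (∑ b : A, Pb b) := by
      calc ∑ b : A, Pb b * (Wb b ^ 2 * α lL ^ 2 * s2b b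
            + 2 * Wb b * α lL * (Cc - Wb b * Qb b) * qb b + (Cc - Wb b * Qb b) ^ 2)
          = ∑ b : A, (α lL ^ 2 * (Pb b * (Wb b ^ 2 * (s2b b - qb b ^ 2)))
              + Pb b * (Wb b * (α lL * qb b - Qb b)) ^ 2
              + 2 * Cc * (Pb b * (Wb b * (α lL * qb b - Qb b)))
              + Cc ^ 2 * Pb b) := Finset.sum_congr rfl fun b _ => by ring
        _ = _ := by
            rw [Finset.sum_add_distrib, Finset.sum_add_distrib, Finset.sum_add_distrib,
              ← Finset.mul_sum, ← Finset.mul_sum, ← Finset.mul_sum]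
    linear_combination expand
      + (2 * (∑ b : A, Pb b * (Wb b * (α lL * qb b - Qb b))) + Cc * (∑ b : A, Pb b)) * hCT
  exact ⟨G1, G2, by linarith, fun h => by linarith⟩
end
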